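/- arXiv:1003.0929 — 5 statements merged into one kernel-verified Lean document; each statement's English description precedes it below -/
import Mathlib

section
/- Let ℰ be a finite set, let R ∈ {0,1}^{ℰ×ℰ} be a matrix with at most one nonzero entry per row that is nilpotent, and let 𝒮 ⊆ {0,1}^ℰ be a set of 0–1 vectors that is monotone (σ ∈ 𝒮 and σ' ≤ σ componentwise imply σ' ∈ 𝒮) and contains, for every e ∈ ℰ, the indicator vector of {e}. Then for every vector x ∈ ℝ₊^ℰ, max_{σ∈𝒮} σᵀ(I − R)x ≥ (Σ_{e∈ℰ} x_e)/|ℰ|². -/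
/-!
Let `c` be the maximal weight. The empty schedule gives `c ≥ 0`, and the single-queue
schedules give `x ≤ c + R x` componentwise. A 0-1 matrix with at most one nonzero entry
per row is substochastic, so iterating gives `x ≤ m c + Rᵐ x` for every `m`; a nilpotent
`|ℰ| × |ℰ|` matrix satisfies `R^|ℰ| = 0` (Cayley–Hamilton), whence `x_e ≤ |ℰ| c` for
every `e` and `∑ x_e ≤ |ℰ|² c`.
-/

open Matrix

namespace Matrix

variable {ι α : Type*} [Fintype ι]

lemma pow_card_eq_zero_of_isNilpotent [DecidableEq ι] [CommRing α] [IsDomain α]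
    {A : Matrix ι ι α} (hA : IsNilpotent A) : A ^ Fintype.card ι = 0 := by
  have hchar : A.charpoly = Polynomial.X ^ Fintype.card ι :=
    sub_eq_zero.mp (isNilpotent_charpoly_sub_pow_of_isNilpotent hA).eq_zero
  simpa only [hchar, map_pow, Polynomial.aeval_X] using A.aeval_self_charpoly

variable [Semiring α] [PartialOrder α] [IsOrderedRing α] {R : Matrix ι ι α}

lemma sum_row_le_one_of_zero_or_one (h01 : ∀ i j, R i j = 0 ∨ R i j = 1)
    (hrow : ∀ i j₁ j₂, R i j₁ ≠ 0 → R i j₂ ≠ 0 → j₁ = j₂) (i : ι) : ∑ j, R i j ≤ 1 := by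
  by_cases h : ∃ j, R i j ≠ 0
  · obtain ⟨j, hj⟩ := h
    rw [Finset.sum_eq_single j (fun k _ hk => not_not.mp fun hk0 => hk (hrow i k j hk0 hj))
      (by simp)]
    exact ((h01 i j).resolve_left hj).le
  · push Not at h
    simp [h]

lemma mulVec_le_mulVec_of_nonneg (hR : ∀ i j, 0 ≤ R i j) {v w : ι → α} (hvw : v ≤ w) :
    R *ᵥ v ≤ R *ᵥ w :=
  fun i => dotProduct_le_dotProduct_of_nonneg_left hvw (hR i)

lemma mulVec_const_le (hrow : ∀ i, ∑ j, R i j ≤ 1) {c : α}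
    (hc : 0 ≤ c) : R *ᵥ (fun _ => c) ≤ fun _ => c := fun i => by
  calc (R *ᵥ fun _ => c) i = (∑ j, R i j) * c := by simp [mulVec, dotProduct, Finset.sum_mul]
    _ ≤ 1 * c := by gcongr; exact hrow i
    _ = c := one_mul c

lemma le_natCast_mul_add_pow_mulVec [DecidableEq ι] (hR : ∀ i j, 0 ≤ R i j)
    (hrow : ∀ i, ∑ j, R i j ≤ 1) {c : α} (hc : 0 ≤ c) {v : ι → α}
    (hv : v ≤ (fun _ => c) + R *ᵥ v) (m : ℕ) :
    v ≤ (fun _ => m * c) + R ^ m *ᵥ v := by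
  induction m with
  | zero => intro i; simp
  | succ m ih =>
    calc v ≤ (fun _ => c) + R *ᵥ v := hv
      _ ≤ (fun _ => c) + R *ᵥ ((fun _ => m * c) + R ^ m *ᵥ v) := by
        gcongr; exact mulVec_le_mulVec_of_nonneg hR ih
      _ = (fun _ => c) + R *ᵥ (fun _ => m * c) + R ^ (m + 1) *ᵥ v := by
        rw [mulVec_add, mulVec_mulVec, pow_succ', add_assoc]
      _ ≤ (fun _ => c) + (fun _ => m * c) + R ^ (m + 1) *ᵥ v := by
        gcongr; exact mulVec_const_le hrow (by positivity)
      _ = (fun _ => ((m + 1 : ℕ) : α) * c) + R ^ (m + 1) *ᵥ v := by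
        congr 1; ext; simp [add_mul, add_comm]

end Matrix

namespace Finset

variable {ι α : Type*} [Semiring α] [LinearOrder α] {S : Finset (ι → α)}

lemma zero_mem_of_zero_or_one_of_downClosed [IsOrderedRing α] (hS : S.Nonempty)
    (h01 : ∀ σ ∈ S, ∀ i, σ i = 0 ∨ σ i = 1)
    (hdown : ∀ σ ∈ S, ∀ σ' : ι → α, (∀ i, σ' i = 0 ∨ σ' i = 1) → (∀ i, σ' i ≤ σ i) → σ' ∈ S) :
    0 ∈ S := by
  obtain ⟨σ, hσ⟩ := hS
  refine hdown σ hσ 0 (fun _ => Or.inl rfl) fun i => ?_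
  rcases h01 σ hσ i with h | h <;> simp [h]

variable [Fintype ι]

lemma zero_le_sup'_dotProduct (hS : S.Nonempty) (h0 : 0 ∈ S) (y : ι → α) :
    0 ≤ S.sup' hS (· ⬝ᵥ y) :=
  S.le_sup'_of_le _ h0 (zero_dotProduct y).ge

lemma apply_le_sup'_dotProduct [DecidableEq ι] (hS : S.Nonempty) {i : ι}
    (hi : Pi.single i 1 ∈ S) (y : ι → α) : y i ≤ S.sup' hS (· ⬝ᵥ y) :=
  S.le_sup'_of_le _ hi (single_one_dotProduct i y).ge

end Finset

theorem max_backpressure_weight_lower_bound_general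
    {E : Type*} [Fintype E] [DecidableEq E]
    (R : Matrix E E ℝ)
    (hR01 : ∀ e e', R e e' = 0 ∨ R e e' = 1)
    (hRrow : ∀ e e₁ e₂, R e e₁ ≠ 0 → R e e₂ ≠ 0 → e₁ = e₂)
    (hRnil : IsNilpotent R)
    (S : Finset (E → ℝ))
    (hS01 : ∀ σ ∈ S, ∀ e, σ e = 0 ∨ σ e = 1)
    (hSmono : ∀ σ ∈ S, ∀ σ' : E → ℝ, (∀ e, σ' e = 0 ∨ σ' e = 1) →
      (∀ e, σ' e ≤ σ e) → σ' ∈ S)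
    (hSsingle : ∀ e : E, (fun e' => if e' = e then (1 : ℝ) else 0) ∈ S)
    (hSne : S.Nonempty)
    (x : E → ℝ) :
    (∑ e, x e) / (Fintype.card E : ℝ) ^ 2 ≤
      S.sup' hSne (fun σ => ∑ e, σ e * ((1 - R) *ᵥ x) e) := by
  set n := Fintype.card E
  set c := S.sup' hSne (· ⬝ᵥ ((1 - R) *ᵥ x))
  have hc : 0 ≤ c := Finset.zero_le_sup'_dotProduct hSne
    (Finset.zero_mem_of_zero_or_one_of_downClosed hSne hS01 hSmono) _
  have hR : ∀ e e', 0 ≤ R e e' := fun e e' => by rcases hR01 e e' with h | h <;> simp [h]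
  have hstep : x ≤ (fun _ => c) + R *ᵥ x := fun e => by
    have hsingle : Pi.single e 1 ∈ S := by
      convert hSsingle e using 1; ext; simp [Pi.single_apply]
    have hle : ((1 - R) *ᵥ x) e ≤ c := Finset.apply_le_sup'_dotProduct hSne hsingle _
    rw [sub_mulVec, one_mulVec, Pi.sub_apply] at hle
    simp only [Pi.add_apply]
    linarith
  have hRn : R ^ n = 0 := pow_card_eq_zero_of_isNilpotent hRnil
  have hbound : x ≤ fun _ => n * c := by
    simpa [hRn] using
      le_natCast_mul_add_pow_mulVec hR (sum_row_le_one_of_zero_or_one hR01 hRrow) hc hstep n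
  refine div_le_of_le_mul₀ (by positivity) hc ?_
  calc ∑ e, x e ≤ ∑ _e : E, n * c := Finset.sum_le_sum fun e _ => hbound e
    _ = c * n ^ 2 := by rw [Finset.sum_const, Finset.card_univ, nsmul_eq_mul]; ring

/-- For a finite set of queues `E`, a 0-1 routing matrix `R` with at
most one nonzero entry per row that is nilpotent, and a monotone schedule set
`S ⊆ {0,1}^E` containing all single-queue indicator vectors, the maximum
back-pressure weight `max_{σ∈S} σᵀ(I-R)x` over any nonnegative vector `x` is at
least `(Σ_e x_e)/|E|²`. -/
theorem max_backpressure_weight_lower_bound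
    {E : Type*} [Fintype E] [DecidableEq E] [Nonempty E]
    (R : Matrix E E ℝ)
    (hR01 : ∀ e e', R e e' = 0 ∨ R e e' = 1)
    (hRrow : ∀ e e₁ e₂, R e e₁ ≠ 0 → R e e₂ ≠ 0 → e₁ = e₂)
    (hRnil : IsNilpotent R)
    (S : Finset (E → ℝ))
    (hS01 : ∀ σ ∈ S, ∀ e, σ e = 0 ∨ σ e = 1)
    (hSmono : ∀ σ ∈ S, ∀ σ' : E → ℝ, (∀ e, σ' e = 0 ∨ σ' e = 1) →
      (∀ e, σ' e ≤ σ e) → σ' ∈ S)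
    (hSsingle : ∀ e : E, (fun e' => if e' = e then (1 : ℝ) else 0) ∈ S)
    (hSne : S.Nonempty)
    (x : E → ℝ) (hx : ∀ e, 0 ≤ x e) :
    (∑ e, x e) / (Fintype.card E : ℝ) ^ 2 ≤
      S.sup' hSne (fun σ => ∑ e, σ e * ((1 - R) *ᵥ x) e) :=
  max_backpressure_weight_lower_bound_general R hR01 hRrow hRnil S hS01 hSmono hSsingle hSne x
end

section
/- Consider a critically loaded system (Leff(ρ) = 1) and any fluid model solution on [0,T] (i.e., a trajectory satisfying only the algorithm-independent fluid equations) with flow-count and queue-length components (n(·), q(·)). Then for every t ∈ [0,T] and every critical virtual resource ζ ∈ CR(ρ), the workload satisfies w_ζ(n(0), q(0)) ≤ w_ζ(n(t), q(t)). -/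
open Matrix Filter

/-- Network data: queues `E`, flow types `F`, routing matrix, schedule set,
ingress map, arrival/departure parameters. -/
structure Network (E F : Type*) [Fintype E] [Fintype F] [DecidableEq E] where
  R : Matrix E E ℝ
  S : Finset (E → ℝ)
  iota : F → E
  ν : F → ℝ
  μ : F → ℝ
  C : ℝ
  hR01 : ∀ e e', R e e' = 0 ∨ R e e' = 1
  hRrow : ∀ e e₁ e₂, R e e₁ ≠ 0 → R e e₂ ≠ 0 → e₁ = e₂
  hRnil : IsNilpotent R
  hS01 : ∀ σ ∈ S, ∀ e, σ e = 0 ∨ σ e = 1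
  hS0 : (0 : E → ℝ) ∈ S
  hSmono : ∀ σ ∈ S, ∀ σ' : E → ℝ, (∀ e, σ' e = 0 ∨ σ' e = 1) → (∀ e, σ' e ≤ σ e) → σ' ∈ S
  hSsingle : ∀ e : E, (fun e' => if e' = e then (1 : ℝ) else 0) ∈ S
  hν : ∀ f, 0 < ν f
  hμ0 : ∀ f, 0 < μ f
  hμ1 : ∀ f, μ f < 1
  hC : ∀ f, ν f / μ f < C

namespace Network

variable {E F : Type*} [Fintype E] [Fintype F] [DecidableEq E] (N : Network E F)

/-- offered load `ρ_f = ν_f / μ_f`. -/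
noncomputable def rho : F → ℝ := fun f => N.ν f / N.μ f

/-- `Ξ = (I - Rᵀ)⁻¹`. -/
noncomputable def Xi : Matrix E E ℝ := (1 - N.R.transpose)⁻¹

/-- ingress matrix `Γ`. -/
noncomputable def Gam : Matrix E F ℝ := Matrix.of fun e f => if N.iota f = e then (1 : ℝ) else 0

/-- implied load `λ = Ξ Γ ρ`. -/
noncomputable def lamv : E → ℝ := N.Xi *ᵥ (N.Gam *ᵥ N.rho)

/-- `Π s`, the vector of service rates induced by schedule weights `s`. -/
def PiV (s : (E → ℝ) → ℝ) : E → ℝ := fun e => ∑ σ ∈ N.S, s σ * σ e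

/-- the primal LP value `PRIMAL(l)`. -/
noncomputable def PRIMAL (l : E → ℝ) : ℝ :=
  sInf { v | ∃ s : (E → ℝ) → ℝ, (∀ σ, 0 ≤ s σ) ∧ (∀ e, l e ≤ N.PiV s e) ∧
    v = ∑ σ ∈ N.S, s σ }

/-- effective load `Leff(ρ) = PRIMAL(ΞΓρ)`. -/
noncomputable def Leff : ℝ := N.PRIMAL N.lamv

/-- feasibility for the dual LP. -/
def dualFeasible (ζ : E → ℝ) : Prop :=
  (∀ e, 0 ≤ ζ e) ∧ ∀ σ ∈ N.S, ∑ e, ζ e * σ e ≤ 1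

/-- the dual LP value `DUAL(l)`. -/
noncomputable def DUAL (l : E → ℝ) : ℝ :=
  sSup { v | ∃ ζ : E → ℝ, N.dualFeasible ζ ∧ v = ∑ e, l e * ζ e }

/-- `CR(ρ)`: the critical virtual resources (optimal solutions of `DUAL(ΞΓρ)`). -/
def CR : Set (E → ℝ) :=
  { ζ | N.dualFeasible ζ ∧ ∑ e, N.lamv e * ζ e = N.DUAL N.lamv }

/-- `CR*(ρ)`: extreme points of `CR(ρ)`. -/
noncomputable def CRstar : Set (E → ℝ) := Set.extremePoints ℝ N.CR

/-- workload `w_ζ(n,q) = ζᵀ Ξ [q + Γ diag(μ)⁻¹ n]`. -/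
noncomputable def workload (ζ : E → ℝ) (n : F → ℝ) (q : E → ℝ) : ℝ :=
  ∑ e, ζ e * (N.Xi *ᵥ (q + N.Gam *ᵥ fun f => n f / N.μ f)) e

/-- cost `c(n,q) = Σ_f n_f/μ_f + Σ_e q_e`. -/
noncomputable def cost (n : F → ℝ) (q : E → ℝ) : ℝ :=
  ∑ f, n f / N.μ f + ∑ e, q e

/-- Lyapunov function `L_α(n,q)`. -/
noncomputable def Lyap (α : ℝ) (n : F → ℝ) (q : E → ℝ) : ℝ :=
  ∑ f, n f ^ (1 + α) / (N.μ f * N.rho f ^ α) + ∑ e, q e ^ (1 + α)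

/-- back-pressure weight of a schedule `σ`: `σᵀ (I - R) q^α`. -/
noncomputable def weight (α : ℝ) (q : E → ℝ) (σ : E → ℝ) : ℝ :=
  ∑ e, σ e * ((1 - N.R) *ᵥ fun e' => q e' ^ α) e

theorem S_nonempty : N.S.Nonempty := ⟨0, N.hS0⟩

/-- the maximum back-pressure weight. -/
noncomputable def maxWeight (α : ℝ) (q : E → ℝ) : ℝ :=
  N.S.sup' N.S_nonempty (N.weight α q)

/-- feasibility for problem `bALGD(n,q)`. -/
def bALGDFeas (n : F → ℝ) (q : E → ℝ) (p : (F → ℝ) × (E → ℝ)) : Prop :=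
  (∀ f, 0 ≤ p.1 f) ∧ (∀ e, 0 ≤ p.2 e) ∧
    ∀ ζ ∈ N.CRstar, N.workload ζ n q ≤ N.workload ζ p.1 p.2

/-- optimality for problem `bALGD(n,q)`. -/
def bALGDOpt (α : ℝ) (n : F → ℝ) (q : E → ℝ) (p : (F → ℝ) × (E → ℝ)) : Prop :=
  N.bALGDFeas n q p ∧ ∀ p', N.bALGDFeas n q p' → N.Lyap α p.1 p.2 ≤ N.Lyap α p'.1 p'.2

/-- the lifting map `Δ`: the unique optimal solution of `bALGD(n,q)`. -/
noncomputable def lift (α : ℝ) (p : (F → ℝ) × (E → ℝ)) : (F → ℝ) × (E → ℝ) :=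
  letI := Classical.dec (∃! p', N.bALGDOpt α p.1 p.2 p')
  if h : ∃! p', N.bALGDOpt α p.1 p.2 p' then h.choose else p

/-- the effective cost `c*(n,q)`. -/
noncomputable def effCost (n : F → ℝ) (q : E → ℝ) : ℝ :=
  sInf { v | ∃ p : (F → ℝ) × (E → ℝ), N.bALGDFeas n q p ∧ v = N.cost p.1 p.2 }

/-- the balance factor `γ(ρ)`. -/
noncomputable def balance : ℝ :=
  sInf { v | ∃ (n : F → ℝ) (q : E → ℝ) (p : (F → ℝ) × (E → ℝ)),
    (∀ f, 0 ≤ n f) ∧ (∀ e, 0 ≤ q e) ∧ N.bALGDFeas n q p ∧ N.cost n q = 1 ∧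
    v = N.cost p.1 p.2 }

/-- the scheduling capacity region `Λ`. -/
def LamSet : Set (E → ℝ) :=
  { l | (∀ e, 0 ≤ l e) ∧ ∃ s : (E → ℝ) → ℝ, (∀ σ, 0 ≤ s σ) ∧
    (∀ e, l e ≤ N.PiV s e) ∧ ∑ σ ∈ N.S, s σ ≤ 1 }

end Network

/-- ℓ1-distance between two states. -/
noncomputable def dist1 {E F : Type*} [Fintype E] [Fintype F]
    (p p' : (F → ℝ) × (E → ℝ)) : ℝ :=
  ∑ f, |p.1 f - p'.1 f| + ∑ e, |p.2 e - p'.2 e|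

/-- A fluid model solution on `[0,T]` (algorithm-independent equations (F1)-(F8)). -/
structure FMS {E F : Type*} [Fintype E] [Fintype F] [DecidableEq E]
    (N : Network E F) (T : ℝ) where
  q : ℝ → E → ℝ
  z : ℝ → E → ℝ
  n : ℝ → F → ℝ
  s : ℝ → (E → ℝ) → ℝ
  xbar : ℝ → F → ℝ
  fa : ℝ → F → ℝ
  d : ℝ → F → ℝ
  a : ℝ → F → ℝ
  lip_q : ∀ e, ∃ K : NNReal, LipschitzOnWith K (fun t => q t e) (Set.Icc 0 T)
  lip_z : ∀ e, ∃ K : NNReal, LipschitzOnWith K (fun t => z t e) (Set.Icc 0 T)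
  lip_n : ∀ f, ∃ K : NNReal, LipschitzOnWith K (fun t => n t f) (Set.Icc 0 T)
  lip_s : ∀ σ, ∃ K : NNReal, LipschitzOnWith K (fun t => s t σ) (Set.Icc 0 T)
  lip_xbar : ∀ f, ∃ K : NNReal, LipschitzOnWith K (fun t => xbar t f) (Set.Icc 0 T)
  lip_fa : ∀ f, ∃ K : NNReal, LipschitzOnWith K (fun t => fa t f) (Set.Icc 0 T)
  lip_d : ∀ f, ∃ K : NNReal, LipschitzOnWith K (fun t => d t f) (Set.Icc 0 T)
  lip_a : ∀ f, ∃ K : NNReal, LipschitzOnWith K (fun t => a t f) (Set.Icc 0 T)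
  nonneg_q : ∀ t ∈ Set.Icc 0 T, ∀ e, 0 ≤ q t e
  nonneg_z : ∀ t ∈ Set.Icc 0 T, ∀ e, 0 ≤ z t e
  nonneg_n : ∀ t ∈ Set.Icc 0 T, ∀ f, 0 ≤ n t f
  nonneg_s : ∀ t ∈ Set.Icc 0 T, ∀ σ, 0 ≤ s t σ
  supp_s : ∀ t ∈ Set.Icc 0 T, ∀ σ ∉ N.S, s t σ = 0
  nonneg_xbar : ∀ t ∈ Set.Icc 0 T, ∀ f, 0 ≤ xbar t f
  nonneg_fa : ∀ t ∈ Set.Icc 0 T, ∀ f, 0 ≤ fa t f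
  nonneg_d : ∀ t ∈ Set.Icc 0 T, ∀ f, 0 ≤ d t f
  nonneg_a : ∀ t ∈ Set.Icc 0 T, ∀ f, 0 ≤ a t f
  eq_n : ∀ t ∈ Set.Icc 0 T, ∀ f, n t f = n 0 f + fa t f - d t f
  eq_fa : ∀ t ∈ Set.Icc 0 T, ∀ f, fa t f = N.ν f * t
  eq_d : ∀ t ∈ Set.Icc 0 T, ∀ f, d t f = N.μ f * xbar t f
  eq_q : ∀ t ∈ Set.Icc 0 T, ∀ e, q t e = q 0 e
      - ((1 - N.R.transpose) *ᵥ N.PiV (s t)) e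
      + ((1 - N.R.transpose) *ᵥ z t) e
      + (N.Gam *ᵥ a t) e
  eq_a : ∀ t ∈ Set.Icc 0 T, ∀ f, a t f = xbar t f
  eq_s : ∀ t ∈ Set.Icc 0 T, ∑ σ ∈ N.S, s t σ = t
  mono_z : ∀ t₁ ∈ Set.Icc 0 T, ∀ t₂ ∈ Set.Icc 0 T, t₁ ≤ t₂ → ∀ e, z t₁ e ≤ z t₂ e
  mono_s : ∀ t₁ ∈ Set.Icc 0 T, ∀ t₂ ∈ Set.Icc 0 T, t₁ ≤ t₂ → ∀ σ, s t₁ σ ≤ s t₂ σ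
  mono_xbar : ∀ t₁ ∈ Set.Icc 0 T, ∀ t₂ ∈ Set.Icc 0 T, t₁ ≤ t₂ → ∀ f, xbar t₁ f ≤ xbar t₂ f

namespace FMS

variable {E F : Type*} [Fintype E] [Fintype F] [DecidableEq E] {N : Network E F} {T : ℝ}

/-- a regular point: all components are differentiable at `t ∈ (0,T)`. -/
def Regular (Φ : FMS N T) (t : ℝ) : Prop :=
  t ∈ Set.Ioo 0 T ∧
  (∀ e, DifferentiableAt ℝ (fun u => Φ.q u e) t) ∧
  (∀ e, DifferentiableAt ℝ (fun u => Φ.z u e) t) ∧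
  (∀ f, DifferentiableAt ℝ (fun u => Φ.n u f) t) ∧
  (∀ σ, DifferentiableAt ℝ (fun u => Φ.s u σ) t) ∧
  (∀ f, DifferentiableAt ℝ (fun u => Φ.xbar u f) t) ∧
  (∀ f, DifferentiableAt ℝ (fun u => Φ.fa u f) t) ∧
  (∀ f, DifferentiableAt ℝ (fun u => Φ.d u f) t) ∧
  (∀ f, DifferentiableAt ℝ (fun u => Φ.a u f) t)

/-- the instantaneous rate `x_f(t) = (d/dt) x̄_f(t)`. -/
noncomputable def rate (Φ : FMS N T) (t : ℝ) (f : F) : ℝ := deriv (fun u => Φ.xbar u f) t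

/-- the α-fair objective `x^{1-α} n^α/(1-α) - q^α x`. -/
noncomputable def obj (α nf qf x : ℝ) : ℝ := x ^ (1 - α) * nf ^ α / (1 - α) - qf ^ α * x

/-- the MWUM-α conditions (F9)-(F12). -/
def IsMWUM (Φ : FMS N T) (α : ℝ) : Prop :=
  (∀ t ∈ Set.Icc (0 : ℝ) T, ∀ e, Φ.z t e = 0) ∧
  ∀ t, Φ.Regular t →
    ((∀ f, (0 < Φ.n t f →
        Φ.rate t f ∈ Set.Icc (0 : ℝ) N.C ∧
        ∀ y ∈ Set.Icc (0 : ℝ) N.C,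
          obj α (Φ.n t f) (Φ.q t (N.iota f)) y ≤
            obj α (Φ.n t f) (Φ.q t (N.iota f)) (Φ.rate t f)) ∧
      (Φ.n t f = 0 → Φ.rate t f = N.rho f)) ∧
    (∀ π ∈ N.S, N.weight α (Φ.q t) π < N.maxWeight α (Φ.q t) →
        deriv (fun u => Φ.s u π) t = 0) ∧
    (∀ f, Φ.n t f = 0 → Φ.q t (N.iota f) = 0))

end FMS


/-! Along a fluid model solution, `Ξ` cancels the factor `1 - Rᵀ` in the queue equation, so
`w_ζ(t) = w_ζ(0) + ζᵀ z(t) - ζᵀ Π s(t) + t λᵀζ`. The idling term is nonnegative, dual feasibility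
gives `ζᵀ Π s(t) ≤ 𝟏ᵀ s(t) = t`, and a critical `ζ` has `λᵀζ = DUAL(λ) ≥ PRIMAL(λ) = 1`. The last
inequality is LP duality, obtained by separating `λ` from the open convex set of loads that a
schedule mix of total time less than one serves with slack in every queue. -/

namespace Network

open Finset Topology

variable {E F : Type*} [Fintype E] [Fintype F] [DecidableEq E] (N : Network E F)

lemma PiV_zero : N.PiV 0 = 0 := by
  ext e; simp [PiV]

lemma PiV_add (s₁ s₂ : (E → ℝ) → ℝ) : N.PiV (s₁ + s₂) = N.PiV s₁ + N.PiV s₂ := by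
  ext e; simp [PiV, add_mul, sum_add_distrib]

lemma PiV_smul (c : ℝ) (s : (E → ℝ) → ℝ) : N.PiV (c • s) = c • N.PiV s := by
  ext e; simp [PiV, mul_sum, mul_assoc]

lemma PiV_indicator {σ : E → ℝ} (hσ : σ ∈ N.S) :
    N.PiV (fun σ' => if σ' = σ then 1 else 0) = σ := by
  ext e; simp [PiV, hσ]

variable {N}

lemma dualFeasible.le_one {ζ : E → ℝ} (hζ : N.dualFeasible ζ) (e : E) : ζ e ≤ 1 := by
  simpa using hζ.2 _ (N.hSsingle e)

lemma dualFeasible.dotProduct_PiV_le {ζ : E → ℝ} (hζ : N.dualFeasible ζ)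
    {s : (E → ℝ) → ℝ} (hs : ∀ σ, 0 ≤ s σ) : ζ ⬝ᵥ N.PiV s ≤ ∑ σ ∈ N.S, s σ := by
  calc ζ ⬝ᵥ N.PiV s = ∑ σ ∈ N.S, s σ * ∑ e, ζ e * σ e := by
        simp only [dotProduct, PiV, mul_sum]
        rw [sum_comm]
        exact sum_congr rfl fun _ _ => sum_congr rfl fun _ _ => by ring
    _ ≤ ∑ σ ∈ N.S, s σ * 1 :=
        sum_le_sum fun σ hσ => mul_le_mul_of_nonneg_left (hζ.2 σ hσ) (hs σ)
    _ = ∑ σ ∈ N.S, s σ := by simp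

variable (N)

lemma le_DUAL (l : E → ℝ) {ζ : E → ℝ} (hζ : N.dualFeasible ζ) : l ⬝ᵥ ζ ≤ N.DUAL l := by
  refine le_csSup ⟨∑ e, |l e|, ?_⟩ ⟨ζ, hζ, rfl⟩
  rintro _ ⟨ζ', hζ', rfl⟩
  refine sum_le_sum fun e _ => ?_
  calc l e * ζ' e ≤ |l e| * ζ' e := mul_le_mul_of_nonneg_right (le_abs_self _) (hζ'.1 e)
    _ ≤ |l e| := mul_le_of_le_one_right (abs_nonneg _) (hζ'.le_one e)

lemma one_le_sum_of_one_le_PRIMAL {l : E → ℝ} (hl : 1 ≤ N.PRIMAL l) {s : (E → ℝ) → ℝ}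
    (hs : ∀ σ, 0 ≤ s σ) (hls : ∀ e, l e ≤ N.PiV s e) : 1 ≤ ∑ σ ∈ N.S, s σ := by
  refine hl.trans (csInf_le ⟨0, ?_⟩ ⟨s, hs, hls, rfl⟩)
  rintro _ ⟨s', hs', -, rfl⟩
  exact sum_nonneg fun σ _ => hs' σ

def subcapacity : Set (E → ℝ) :=
  {x | ∃ s : (E → ℝ) → ℝ, (∀ σ, 0 ≤ s σ) ∧ ∑ σ ∈ N.S, s σ < 1 ∧ ∀ e, x e < N.PiV s e}

lemma isOpen_subcapacity : IsOpen N.subcapacity := by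
  have : N.subcapacity = ⋃ s ∈ {s : (E → ℝ) → ℝ | (∀ σ, 0 ≤ s σ) ∧ ∑ σ ∈ N.S, s σ < 1},
      Set.univ.pi fun e => Set.Iio (N.PiV s e) := by
    ext x; simp [subcapacity, and_assoc]
  rw [this]
  exact isOpen_biUnion fun s _ => isOpen_set_pi Set.finite_univ fun _ _ => isOpen_Iio

lemma convex_subcapacity : Convex ℝ N.subcapacity := by
  rintro x ⟨s₁, hs₁, hsum₁, hx⟩ y ⟨s₂, hs₂, hsum₂, hy⟩ a b ha hb hab
  refine ⟨a • s₁ + b • s₂, fun σ => ?_, ?_, fun e => ?_⟩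
  · simpa using add_nonneg (mul_nonneg ha (hs₁ σ)) (mul_nonneg hb (hs₂ σ))
  · simpa [sum_add_distrib, ← mul_sum] using convex_Iio (1 : ℝ) hsum₁ hsum₂ ha hb hab
  · have := convex_Iio (0 : ℝ) (sub_neg.2 (hx e)) (sub_neg.2 (hy e)) ha hb hab
    simp only [Set.mem_Iio, smul_eq_mul] at this
    simp only [PiV_add, PiV_smul, Pi.add_apply, Pi.smul_apply, smul_eq_mul]
    linarith

lemma notMem_subcapacity {l : E → ℝ} (hl : 1 ≤ N.PRIMAL l) : l ∉ N.subcapacity := by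
  rintro ⟨s, hs, hsum, hls⟩
  exact (N.one_le_sum_of_one_le_PRIMAL hl hs fun e => (hls e).le).not_gt hsum

lemma PiV_add_mem_closure_subcapacity {s : (E → ℝ) → ℝ} (hs : ∀ σ, 0 ≤ s σ)
    (hsum : ∑ σ ∈ N.S, s σ ≤ 1) {b : E → ℝ} (hb : ∀ e, b e ≤ 0) :
    N.PiV s + b ∈ closure N.subcapacity := by
  -- for `c ∈ (0, 1)`, the schedule mix `c • s` serves `c • (Π s + b) - (1 - c) • 𝟏` with slack
  set path : ℝ → E → ℝ := fun c => c • (N.PiV s + b) + (c - 1) • 1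
  have hpath : Tendsto path (𝓝[<] 1) (𝓝 (N.PiV s + b)) := by
    have : Continuous path := by fun_prop
    simpa [path] using (this.tendsto 1).mono_left nhdsWithin_le_nhds
  refine mem_closure_of_tendsto hpath ?_
  filter_upwards [Ioo_mem_nhdsLT zero_lt_one] with c ⟨hc₀, hc₁⟩
  refine ⟨c • s, fun σ => mul_nonneg hc₀.le (hs σ), ?_, fun e => ?_⟩
  · simpa [← mul_sum] using (mul_le_of_le_one_right hc₀.le hsum).trans_lt hc₁
  · simp only [path, PiV_smul, Pi.add_apply, Pi.smul_apply, Pi.one_apply, smul_eq_mul]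
    nlinarith [hb e]

section Separation

variable {N} {f : StrongDual ℝ (E → ℝ)} {c : ℝ}

lemma apply_indicator_nonneg (hf : ∀ y ∈ closure N.subcapacity, f y ≤ c) (e : E) :
    0 ≤ f fun e' => if e' = e then 1 else 0 := by
  set φ := f fun e' => if e' = e then 1 else 0
  have hray (t : ℝ) (ht : 0 ≤ t) : -t * φ ≤ c := by
    have := hf _ (N.PiV_add_mem_closure_subcapacity (s := 0) (fun _ => le_rfl) (by simp)
      (b := -t • fun e' => if e' = e then 1 else 0) fun e' => by
        by_cases h : e' = e <;> simp [h, ht])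
    simpa [PiV_zero, φ] using this
  by_contra! hneg
  have ht : 0 ≤ (|c| + 1) / -φ := div_nonneg (by positivity) (neg_nonneg.2 hneg.le)
  have heq : -((|c| + 1) / -φ) * φ = |c| + 1 := by field_simp [hneg.ne]
  linarith [hray _ ht, le_abs_self c]

lemma apply_le_of_mem_S (hf : ∀ y ∈ closure N.subcapacity, f y ≤ c) {σ : E → ℝ}
    (hσ : σ ∈ N.S) : f σ ≤ c := by
  simpa [N.PiV_indicator hσ] using hf _ (N.PiV_add_mem_closure_subcapacity
    (s := fun σ' => if σ' = σ then 1 else 0) (fun σ' => by split_ifs <;> norm_num)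
    (by simp [hσ]) (b := 0) fun _ => le_rfl)

end Separation

lemma exists_dualFeasible_of_one_le_PRIMAL {l : E → ℝ} (hl : 1 ≤ N.PRIMAL l) :
    ∃ ζ, N.dualFeasible ζ ∧ l ⬝ᵥ ζ = 1 := by
  obtain ⟨f, hf⟩ := geometric_hahn_banach_open_point N.convex_subcapacity
    N.isOpen_subcapacity (N.notMem_subcapacity hl)
  have hcl : ∀ y ∈ closure N.subcapacity, f y ≤ f l :=
    closure_minimal (fun y hy => (hf y hy).le) (isClosed_le f.continuous continuous_const)
  set φ : E → ℝ := fun e => f fun e' => if e' = e then 1 else 0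
  have hrep (x : E → ℝ) : f x = x ⬝ᵥ φ := by
    simpa [dotProduct, φ, eq_comm] using f.toLinearMap.pi_apply_eq_sum_univ x
  have hpos : 0 < f l := by
    by_contra! hle
    have hφ : φ = 0 := funext fun e =>
      le_antisymm ((apply_le_of_mem_S hcl (N.hSsingle e)).trans hle) (apply_indicator_nonneg hcl e)
    have := hf (-1) ⟨0, fun _ => le_rfl, by simp, fun e => by simp [PiV_zero]⟩
    simp [hrep, hφ] at this
  refine ⟨(f l)⁻¹ • φ, ⟨fun e => ?_, fun σ hσ => ?_⟩, ?_⟩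
  · exact mul_nonneg (inv_nonneg.2 hpos.le) (apply_indicator_nonneg hcl e)
  · have : σ ⬝ᵥ ((f l)⁻¹ • φ) ≤ 1 := by
      rw [dotProduct_smul, ← hrep, smul_eq_mul, inv_mul_le_one₀ hpos]
      exact apply_le_of_mem_S hcl hσ
    simpa [dotProduct, mul_comm] using this
  · rw [dotProduct_smul, ← hrep, smul_eq_mul, inv_mul_cancel₀ hpos.ne']

lemma one_le_DUAL {l : E → ℝ} (hl : 1 ≤ N.PRIMAL l) : 1 ≤ N.DUAL l := by
  obtain ⟨ζ, hζ, hval⟩ := N.exists_dualFeasible_of_one_le_PRIMAL hl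
  exact hval ▸ N.le_DUAL l hζ

lemma Xi_mul_one_sub : N.Xi * (1 - N.Rᵀ) = 1 :=
  Matrix.nonsing_inv_mul _ <| (Matrix.isUnit_iff_isUnit_det _).mp <|
    (Matrix.isNilpotent_transpose_iff.mpr N.hRnil).isUnit_one_sub

lemma workload_eq_dotProduct (ζ : E → ℝ) (n : F → ℝ) (q : E → ℝ) :
    N.workload ζ n q = ζ ⬝ᵥ (N.Xi *ᵥ (q + N.Gam *ᵥ fun f => n f / N.μ f)) := rfl

end Network

namespace FMS

variable {E F : Type*} [Fintype E] [Fintype F] [DecidableEq E] {N : Network E F} {T : ℝ}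
  (Φ : FMS N T) {t : ℝ}

lemma a_add_n_div_μ (ht : t ∈ Set.Icc 0 T) :
    Φ.a t + (fun f => Φ.n t f / N.μ f) = (fun f => Φ.n 0 f / N.μ f) + t • N.rho := by
  ext f
  have hμ := (N.hμ0 f).ne'
  simp only [Pi.add_apply, Pi.smul_apply, smul_eq_mul, Network.rho, Φ.eq_a t ht,
    Φ.eq_n t ht, Φ.eq_fa t ht, Φ.eq_d t ht]
  field_simp
  ring

lemma q_add_Gam_mulVec (ht : t ∈ Set.Icc 0 T) :
    Φ.q t + N.Gam *ᵥ (fun f => Φ.n t f / N.μ f) =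
      Φ.q 0 + N.Gam *ᵥ (fun f => Φ.n 0 f / N.μ f) +
        (1 - N.Rᵀ) *ᵥ (Φ.z t - N.PiV (Φ.s t)) + t • (N.Gam *ᵥ N.rho) := by
  have hflow := congrArg (N.Gam *ᵥ ·) (Φ.a_add_n_div_μ ht)
  simp only [Matrix.mulVec_add, Matrix.mulVec_smul] at hflow
  ext e
  have := congrFun hflow e
  simp only [Pi.add_apply, Pi.smul_apply, smul_eq_mul] at this ⊢
  rw [Φ.eq_q t ht e, Matrix.mulVec_sub]
  simp only [Pi.sub_apply]
  linarith

lemma workload_eq (ht : t ∈ Set.Icc 0 T) (ζ : E → ℝ) :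
    N.workload ζ (Φ.n t) (Φ.q t) = N.workload ζ (Φ.n 0) (Φ.q 0) + ζ ⬝ᵥ Φ.z t -
      ζ ⬝ᵥ N.PiV (Φ.s t) + t * (N.lamv ⬝ᵥ ζ) := by
  rw [N.workload_eq_dotProduct, Φ.q_add_Gam_mulVec ht, Matrix.mulVec_add, Matrix.mulVec_add,
    Matrix.mulVec_smul, Matrix.mulVec_mulVec, N.Xi_mul_one_sub, Matrix.one_mulVec,
    dotProduct_add, dotProduct_add, dotProduct_sub, dotProduct_smul, ← N.workload_eq_dotProduct,
    Network.lamv, dotProduct_comm _ ζ, smul_eq_mul]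
  ring

end FMS

theorem workload_conservation_general
    {E F : Type*} [Fintype E] [Fintype F] [DecidableEq E]
    (N : Network E F) (hcrit : N.Leff = 1)
    (T : ℝ) (Φ : FMS N T)
    (t : ℝ) (ht : t ∈ Set.Icc 0 T) (ζ : E → ℝ) (hζ : ζ ∈ N.CR) :
    N.workload ζ (Φ.n 0) (Φ.q 0) ≤ N.workload ζ (Φ.n t) (Φ.q t) := by
  have hidle : 0 ≤ ζ ⬝ᵥ Φ.z t := dotProduct_nonneg_of_nonneg hζ.1.1 (Φ.nonneg_z t ht)
  have hservice : ζ ⬝ᵥ N.PiV (Φ.s t) ≤ t :=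
    (hζ.1.dotProduct_PiV_le (Φ.nonneg_s t ht)).trans_eq (Φ.eq_s t ht)
  have hload : 1 ≤ N.lamv ⬝ᵥ ζ := (N.one_le_DUAL hcrit.ge).trans_eq hζ.2.symm
  rw [Φ.workload_eq ht]
  nlinarith [ht.1]

/-- Workload conservation: in a critically loaded system, along
any fluid model solution (any policy), the workload of every critical virtual
resource is non-decreasing from its initial value. -/
theorem workload_conservation
    {E F : Type*} [Fintype E] [Fintype F] [DecidableEq E]
    (N : Network E F) (hcrit : N.Leff = 1)
    (T : ℝ) (hT : 0 < T) (Φ : FMS N T)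
    (t : ℝ) (ht : t ∈ Set.Icc 0 T) (ζ : E → ℝ) (hζ : ζ ∈ N.CR) :
    N.workload ζ (Φ.n 0) (Φ.q 0) ≤ N.workload ζ (Φ.n t) (Φ.q t) :=
  workload_conservation_general N hcrit T Φ t ht ζ hζ
end

section
/- Suppose the system is critically loaded (Leff(ρ) = 1) and ΞΓρ > 0 componentwise. Then for every (n,q) ∈ ℝ₊^ℱ × ℝ₊^ℰ, a state (n',q') ∈ ℝ₊^ℱ × ℝ₊^ℰ is feasible for the optimization problem ALGP(n,q) (i.e., there exist t ≥ 0, x ∈ [0,C]^ℱ and σ ∈ Λ with n' = n + t[ν − diag(μ)x] and q' = q + t[Γx − (I − Rᵀ)σ]) if and only if it is feasible for bALGD(n,q) (i.e., w_ζ(n',q') ≥ w_ζ(n,q) for all ζ ∈ CR*(ρ)). -/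
open Matrix Filter

/-!
Let `Z = {ζ ≥ 0 | ζ ⬝ σ ≤ 1 for σ ∈ 𝒮}` be the dual feasible polytope and `λ = ΞΓρ`.
Hahn–Banach separation from `conv 𝒮`, with the monotonicity of `𝒮`, gives
`Λ = {l ≥ 0 | ζ ⬝ l ≤ 1 on Z}`, and with critical loading `ζ ⬝ λ = 1` on `CR(ρ)`. An ALGP move
`(t, x, σ)` changes `w_ζ` by `t (ζ ⬝ λ - ζ ⬝ σ)`, which is `≥ 0` for `ζ ∈ CR(ρ)`.
Conversely, let `u = Ξ[(q' - q) + Γ diag(μ)⁻¹ (n' - n)]`, so that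
`w_ζ(n',q') - w_ζ(n,q) = ζ ⬝ u`, and take `t = ε⁻¹`, `x = ρ - ε diag(μ)⁻¹ (n' - n)`,
`σ = λ - ε u`. For small `ε > 0`, `x ∈ [0, C]` and `σ ≥ 0` since `0 < ρ < C` and `λ > 0`,
and `ζ ⬝ σ ≤ 1` at each of the finitely many vertices of `Z`, because a vertex with
`ζ ⬝ u < 0` lies outside `CR*(ρ)` and so has `ζ ⬝ λ < 1`. By Krein–Milman this extends to
all of `Z`, so `σ ∈ Λ`.
-/

open Topology

theorem finite_extremePoints_setOf_forall_le {V ι : Type*} [AddCommGroup V] [Module ℝ V]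
    [Finite ι] (φ : ι → V →ₗ[ℝ] ℝ) (b : ι → ℝ) :
    (Set.extremePoints ℝ {x | ∀ i, φ i x ≤ b i}).Finite := by
  set P := {x | ∀ i, φ i x ≤ b i}
  -- An extreme point is determined by its set of active constraints: if `y` has the same
  -- active set as `x`, then `x` can be pushed slightly away from `y` inside `P`.
  refine Set.Finite.of_finite_image (f := fun x => {i | φ i x = b i}) (Set.toFinite _) ?_
  intro x hx y hy hxy
  have hnear : ∀ᶠ δ in 𝓝[>] (0 : ℝ), x + δ • (x - y) ∈ P := by
    simp only [P, Set.mem_ofPred_eq, map_add, map_smul, map_sub, smul_eq_mul]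
    refine eventually_all.2 fun i => ?_
    rcases (hx.1 i).eq_or_lt with hact | hlt
    · have hact' : φ i y = b i := (Set.ext_iff.1 hxy i).1 hact
      exact .of_forall fun δ => by simp [hact, hact']
    · have hlim : Tendsto (fun δ : ℝ => φ i x + δ * (φ i x - φ i y)) (𝓝[>] 0) (𝓝 (φ i x)) := by
        simpa using ((tendsto_id.mul_const _).const_add (φ i x)).mono_left
          (nhdsWithin_le_nhds (a := (0 : ℝ)))
      exact (hlim.eventually_lt_const hlt).mono fun _ => le_of_lt
  obtain ⟨δ, hδP, hδ : 0 < δ⟩ := (hnear.and self_mem_nhdsWithin).exists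
  have hseg : x ∈ openSegment ℝ (x + δ • (x - y)) y := by
    refine ⟨1 / (1 + δ), δ / (1 + δ), by positivity, by positivity, by field_simp, ?_⟩
    match_scalars <;> field_simp; ring
  exact ((mem_extremePoints.1 hx).2 _ hδP y hy.1 hseg).2.symm

theorem IsCompact.subset_of_extremePoints_subset {V : Type*} [AddCommGroup V] [Module ℝ V]
    [TopologicalSpace V] [T2Space V] [IsTopologicalAddGroup V] [ContinuousSMul ℝ V]
    [LocallyConvexSpace ℝ V] {s t : Set V} (hs : IsCompact s) (hsc : Convex ℝ s)
    (ht : IsClosed t) (htc : Convex ℝ t) (h : s.extremePoints ℝ ⊆ t) : s ⊆ t := by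
  rw [← closure_convexHull_extremePoints hs hsc]
  exact closure_minimal (convexHull_min h htc) ht

theorem eventually_sub_mul_mem {a : ℝ} (b : ℝ) {s : Set ℝ} (hs : s ∈ 𝓝 a) :
    ∀ᶠ ε in 𝓝 (0 : ℝ), a - ε * b ∈ s := by
  have hlim : Tendsto (fun ε : ℝ => a - ε * b) (𝓝 0) (𝓝 a) := by
    simpa using ((tendsto_id (x := 𝓝 (0 : ℝ))).mul_const b).const_sub a
  exact hlim hs

theorem eventually_nhdsGT_sub_mul_le {a b c : ℝ} (hac : a ≤ c) (hb : b < 0 → a < c) :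
    ∀ᶠ ε in 𝓝[>] 0, a - ε * b ≤ c := by
  rcases le_or_gt 0 b with hb0 | hb0
  · filter_upwards [self_mem_nhdsWithin] with ε (hε : 0 < ε)
    nlinarith
  · exact ((eventually_sub_mul_mem b (Iio_mem_nhds (hb hb0))).filter_mono
      nhdsWithin_le_nhds).mono fun _ h => le_of_lt h

namespace Network

variable {E F : Type*} [Fintype E] [Fintype F] [DecidableEq E] (N : Network E F)

theorem nonneg_of_mem_S {σ : E → ℝ} (hσ : σ ∈ N.S) (e : E) : 0 ≤ σ e := by
  rcases N.hS01 σ hσ e with h | h <;> simp [h]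

theorem ite_mem_S {σ : E → ℝ} (hσ : σ ∈ N.S) (p : E → Prop) [DecidablePred p] :
    (fun e => if p e then σ e else 0) ∈ N.S := by
  refine N.hSmono σ hσ _ (fun e => ?_) (fun e => ?_) <;> split_ifs
  · exact N.hS01 σ hσ e
  · exact Or.inl rfl
  · exact le_rfl
  · exact N.nonneg_of_mem_S hσ e

theorem PiV_eq_sum (s : (E → ℝ) → ℝ) : N.PiV s = ∑ σ ∈ N.S, s σ • σ := by
  ext e
  simp [PiV, Finset.sum_apply]

theorem dotProduct_le_sum_of_le_PiV {ζ l : E → ℝ} {s : (E → ℝ) → ℝ} (hζ : N.dualFeasible ζ)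
    (hs : ∀ σ, 0 ≤ s σ) (hl : ∀ e, l e ≤ N.PiV s e) : ζ ⬝ᵥ l ≤ ∑ σ ∈ N.S, s σ :=
  calc ζ ⬝ᵥ l ≤ ζ ⬝ᵥ N.PiV s := dotProduct_le_dotProduct_of_nonneg_left hl hζ.1
    _ = ∑ σ ∈ N.S, s σ * (ζ ⬝ᵥ σ) := by simp [PiV_eq_sum, dotProduct_sum, dotProduct_smul]
    _ ≤ ∑ σ ∈ N.S, s σ :=
      Finset.sum_le_sum fun σ hσ => mul_le_of_le_one_right (hs σ) (hζ.2 σ hσ)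

theorem exists_primal_feasible (l : E → ℝ) :
    ∃ s : (E → ℝ) → ℝ, (∀ σ, 0 ≤ s σ) ∧ ∀ e, l e ≤ N.PiV s e := by
  set M := ∑ e, |l e|
  have hM : 0 ≤ M := Finset.sum_nonneg fun e _ => abs_nonneg (l e)
  refine ⟨fun _ => M, fun _ => hM, fun e => ?_⟩
  calc l e ≤ M := (le_abs_self _).trans
        (Finset.single_le_sum (fun e' _ => abs_nonneg (l e')) (Finset.mem_univ e))
    _ = M * (fun e' => if e' = e then (1 : ℝ) else 0) e := by simp
    _ ≤ N.PiV (fun _ => M) e := Finset.single_le_sum (f := fun σ => M * σ e)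
        (fun σ hσ => mul_nonneg hM (N.nonneg_of_mem_S hσ e)) (N.hSsingle e)

theorem dotProduct_le_PRIMAL {ζ : E → ℝ} (hζ : N.dualFeasible ζ) (l : E → ℝ) :
    ζ ⬝ᵥ l ≤ N.PRIMAL l := by
  obtain ⟨s, hs, hl⟩ := N.exists_primal_feasible l
  refine le_csInf ⟨_, s, hs, hl, rfl⟩ ?_
  rintro v ⟨s, hs, hl, rfl⟩
  exact N.dotProduct_le_sum_of_le_PiV hζ hs hl

theorem PRIMAL_le_of_smul_mem_LamSet {l : E → ℝ} {c : ℝ} (hc : 0 < c)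
    (h : c • l ∈ N.LamSet) : N.PRIMAL l ≤ c⁻¹ := by
  obtain ⟨-, s, hs, hls, hsum⟩ := h
  have hbdd : BddBelow {v | ∃ s : (E → ℝ) → ℝ, (∀ σ, 0 ≤ s σ) ∧ (∀ e, l e ≤ N.PiV s e) ∧
      v = ∑ σ ∈ N.S, s σ} := by
    refine ⟨0, ?_⟩
    rintro v ⟨s, hs, -, rfl⟩
    exact Finset.sum_nonneg fun σ _ => hs σ
  refine csInf_le_of_le hbdd ⟨fun σ => c⁻¹ * s σ, fun σ => by have := hs σ; positivity,
    fun e => ?_, rfl⟩ ?_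
  · have hPi : N.PiV (fun σ => c⁻¹ * s σ) e = c⁻¹ * N.PiV s e := by
      simp only [PiV, Finset.mul_sum, mul_assoc]
    rw [hPi, le_inv_mul_iff₀ hc]
    simpa using hls e
  · rw [← Finset.mul_sum]
    exact mul_le_of_le_one_right (by positivity) hsum

theorem convexHull_S_subset_LamSet : convexHull ℝ (N.S : Set (E → ℝ)) ⊆ N.LamSet := by
  intro l hl
  obtain ⟨w, hw0, hw1, rfl⟩ := Finset.mem_convexHull'.1 hl
  have hw : ∀ σ ∈ N.S, max (w σ) 0 = w σ := fun σ hσ => max_eq_left (hw0 σ hσ)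
  refine ⟨fun e => ?_, fun σ => max (w σ) 0, fun σ => le_max_right _ _, fun e => ?_, ?_⟩
  · rw [Finset.sum_apply]
    exact Finset.sum_nonneg fun σ hσ => mul_nonneg (hw0 σ hσ) (N.nonneg_of_mem_S hσ e)
  · rw [PiV_eq_sum]
    exact (congrFun (Finset.sum_congr rfl fun σ hσ => by rw [hw σ hσ]) e).ge
  · rw [Finset.sum_congr rfl hw, hw1]

theorem exists_dualFeasible_one_lt_of_notMem_convexHull {l : E → ℝ} (hl0 : ∀ e, 0 ≤ l e)
    (hl : l ∉ convexHull ℝ (N.S : Set (E → ℝ))) :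
    ∃ ζ, N.dualFeasible ζ ∧ 1 < ζ ⬝ᵥ l := by
  obtain ⟨f, u, hfS, hfl⟩ := geometric_hahn_banach_closed_point (convex_convexHull ℝ _)
    (N.S.finite_toSet.isCompact_convexHull (𝕜 := ℝ)).isClosed hl
  set g : E → ℝ := fun e => f fun e' => if e = e' then 1 else 0
  have hf : ∀ v, f v = g ⬝ᵥ v := fun v => by
    rw [← ContinuousLinearMap.coe_coe, LinearMap.pi_apply_eq_sum_univ]
    simp [dotProduct, g, mul_comm]
  set gp : E → ℝ := fun e => max (g e) 0
  -- Replacing `σ` by its restriction to `{g ≥ 0}` keeps it in `𝒮` and turns `g` into `g⁺`.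
  have hgp : ∀ σ ∈ N.S, gp ⬝ᵥ σ < u := fun σ hσ => by
    have hres : gp ⬝ᵥ σ = g ⬝ᵥ fun e => if 0 ≤ g e then σ e else 0 := by
      refine Finset.sum_congr rfl fun e _ => ?_
      by_cases h : 0 ≤ g e
      · simp [gp, h]
      · simp [gp, h, (not_le.1 h).le]
    rw [hres, ← hf]
    exact hfS _ (subset_convexHull ℝ _ (N.ite_mem_S hσ _))
  have hu : 0 < u := by simpa [gp] using hgp 0 N.hS0
  refine ⟨u⁻¹ • gp, ⟨fun e => by simp only [Pi.smul_apply, smul_eq_mul, gp]; positivity,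
    fun σ hσ => ?_⟩, ?_⟩
  · change (u⁻¹ • gp) ⬝ᵥ σ ≤ 1
    rw [smul_dotProduct, smul_eq_mul, inv_mul_le_one₀ hu]
    exact (hgp σ hσ).le
  · have hgl : g ⬝ᵥ l ≤ gp ⬝ᵥ l :=
      Finset.sum_le_sum fun e _ => mul_le_mul_of_nonneg_right (le_max_left _ _) (hl0 e)
    rw [dotProduct_comm, dotProduct_smul, smul_eq_mul, dotProduct_comm, one_lt_inv_mul₀ hu]
    linarith [hf l]

theorem mem_LamSet_iff {l : E → ℝ} (hl : ∀ e, 0 ≤ l e) :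
    l ∈ N.LamSet ↔ ∀ ζ, N.dualFeasible ζ → ζ ⬝ᵥ l ≤ 1 := by
  refine ⟨fun ⟨_, s, hs, hls, hsum⟩ ζ hζ => (N.dotProduct_le_sum_of_le_PiV hζ hs hls).trans hsum,
    fun h => N.convexHull_S_subset_LamSet (not_not.1 fun hconv => ?_)⟩
  obtain ⟨ζ, hζ, hlt⟩ := N.exists_dualFeasible_one_lt_of_notMem_convexHull hl hconv
  exact (h ζ hζ).not_gt hlt

/-- `DUAL`'s constraints `-ζ e ≤ 0` and `σ ⬝ ζ ≤ 1` as `dualConstraint i ζ ≤ dualBound i`. -/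
def dualConstraint : E ⊕ N.S → (E → ℝ) →ₗ[ℝ] ℝ :=
  Sum.elim (fun e => -LinearMap.proj e) fun σ => dotProductBilin ℝ ℝ σ.1

def dualBound : E ⊕ N.S → ℝ := Sum.elim 0 1

theorem setOf_dualFeasible_eq :
    {ζ | N.dualFeasible ζ} = {ζ | ∀ i, N.dualConstraint i ζ ≤ N.dualBound i} := by
  ext ζ
  simp [dualFeasible, dualConstraint, dualBound, Sum.forall, dotProduct, mul_comm]

theorem finite_extremePoints_setOf_dualFeasible :
    (Set.extremePoints ℝ {ζ | N.dualFeasible ζ}).Finite := by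
  rw [setOf_dualFeasible_eq]
  exact finite_extremePoints_setOf_forall_le _ _

theorem convex_setOf_dualFeasible : Convex ℝ {ζ | N.dualFeasible ζ} := by
  rw [setOf_dualFeasible_eq, Set.ofPred_forall]
  exact convex_iInter fun i => convex_halfSpace_le (N.dualConstraint i).isLinear _

theorem isCompact_setOf_dualFeasible : IsCompact {ζ | N.dualFeasible ζ} := by
  refine (isCompact_univ_pi fun _ => isCompact_Icc (a := (0 : ℝ)) (b := 1)).of_isClosed_subset
    ?_ fun ζ hζ e _ => ⟨hζ.1 e, by simpa using hζ.2 _ (N.hSsingle e)⟩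
  rw [setOf_dualFeasible_eq, Set.ofPred_forall]
  exact isClosed_iInter fun i =>
    isClosed_le (LinearMap.continuous_of_finiteDimensional _) continuous_const

theorem mem_LamSet_of_forall_extremePoints {l : E → ℝ} (hl : ∀ e, 0 ≤ l e)
    (h : ∀ ζ ∈ Set.extremePoints ℝ {ζ | N.dualFeasible ζ}, ζ ⬝ᵥ l ≤ 1) : l ∈ N.LamSet :=
  (N.mem_LamSet_iff hl).2 fun _ hζ =>
    N.isCompact_setOf_dualFeasible.subset_of_extremePoints_subset N.convex_setOf_dualFeasible
      (t := {ζ | ζ ⬝ᵥ l ≤ 1}) (isClosed_le (continuous_id.dotProduct continuous_const)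
        continuous_const) (convex_halfSpace_le ((dotProductBilin ℝ ℝ).flip l).isLinear 1) h hζ

variable {N}

theorem dotProduct_lamv_le_one (hcrit : N.Leff = 1) {ζ : E → ℝ} (hζ : N.dualFeasible ζ) :
    ζ ⬝ᵥ N.lamv ≤ 1 :=
  hcrit ▸ N.dotProduct_le_PRIMAL hζ N.lamv

theorem DUAL_lamv_eq_one (hcrit : N.Leff = 1) (hpos : ∀ e, 0 < N.lamv e) :
    N.DUAL N.lamv = 1 := by
  have hbdd : BddAbove {v | ∃ ζ, N.dualFeasible ζ ∧ v = ∑ e, N.lamv e * ζ e} := by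
    refine ⟨1, ?_⟩
    rintro v ⟨ζ, hζ, rfl⟩
    exact (dotProduct_comm N.lamv ζ).trans_le (dotProduct_lamv_le_one hcrit hζ)
  refine le_antisymm (csSup_le ⟨0, 0, ⟨fun _ => le_rfl, fun _ _ => by simp⟩, by simp⟩ ?_)
    (le_of_forall_lt_imp_le_of_dense fun c hc => ?_)
  · rintro v ⟨ζ, hζ, rfl⟩
    exact (dotProduct_comm N.lamv ζ).trans_le (dotProduct_lamv_le_one hcrit hζ)
  rcases le_or_gt c 0 with hc0 | hc0
  · exact hc0.trans (le_csSup hbdd ⟨0, ⟨fun _ => le_rfl, fun _ _ => by simp⟩, by simp⟩)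
  -- `c⁻¹ λ ∉ Λ` since otherwise `Leff ≤ c < 1`; a separating dual vector exceeds `c`.
  have hnot : c⁻¹ • N.lamv ∉ N.LamSet := fun h => by
    have := N.PRIMAL_le_of_smul_mem_LamSet (inv_pos.2 hc0) h
    rw [inv_inv] at this
    exact (show N.Leff < 1 from this.trans_lt hc).ne hcrit
  rw [N.mem_LamSet_iff (l := c⁻¹ • N.lamv) fun e =>
    smul_nonneg (inv_nonneg.2 hc0.le) (hpos e).le] at hnot
  simp only [not_forall, not_le, exists_prop] at hnot
  obtain ⟨ζ, hζ, hlt⟩ := hnot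
  rw [dotProduct_smul, smul_eq_mul, one_lt_inv_mul₀ hc0] at hlt
  exact hlt.le.trans (le_csSup hbdd ⟨ζ, hζ, dotProduct_comm ζ N.lamv⟩)

theorem dotProduct_lamv_eq_one_of_mem_CR (hcrit : N.Leff = 1) (hpos : ∀ e, 0 < N.lamv e)
    {ζ : E → ℝ} (hζ : ζ ∈ N.CR) : ζ ⬝ᵥ N.lamv = 1 := by
  rw [dotProduct_comm, ← DUAL_lamv_eq_one hcrit hpos]
  exact hζ.2

theorem mem_CRstar_of_mem_extremePoints (hcrit : N.Leff = 1) (hpos : ∀ e, 0 < N.lamv e)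
    {ζ : E → ℝ} (hζ : ζ ∈ Set.extremePoints ℝ {ζ | N.dualFeasible ζ})
    (h1 : ζ ⬝ᵥ N.lamv = 1) : ζ ∈ N.CRstar :=
  inter_extremePoints_subset_extremePoints_of_subset (fun _ h => h.1)
    ⟨⟨hζ.1, by rw [DUAL_lamv_eq_one hcrit hpos, ← h1, dotProduct_comm]; rfl⟩, hζ⟩

variable (N)

theorem isUnit_det_one_sub_transpose_R : IsUnit (1 - N.R.transpose).det := by
  obtain ⟨k, hk⟩ := N.hRnil
  have hRt : IsNilpotent N.R.transpose := ⟨k, by rw [← transpose_pow, hk, transpose_zero]⟩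
  exact (isUnit_iff_isUnit_det _).1 hRt.isUnit_one_sub

theorem Xi_mulVec_one_sub (v : E → ℝ) : N.Xi *ᵥ ((1 - N.R.transpose) *ᵥ v) = v := by
  rw [mulVec_mulVec, Xi, nonsing_inv_mul _ N.isUnit_det_one_sub_transpose_R, one_mulVec]

theorem one_sub_mulVec_Xi (v : E → ℝ) : (1 - N.R.transpose) *ᵥ (N.Xi *ᵥ v) = v := by
  rw [mulVec_mulVec, Xi, mul_nonsing_inv _ N.isUnit_det_one_sub_transpose_R, one_mulVec]

theorem rho_pos (f : F) : 0 < N.rho f := div_pos (N.hν f) (N.hμ0 f)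

noncomputable def displacement (n n' : F → ℝ) (q q' : E → ℝ) : E → ℝ :=
  N.Xi *ᵥ ((q' - q) + N.Gam *ᵥ fun f => (n' f - n f) / N.μ f)

theorem workload_sub_workload (ζ : E → ℝ) (n n' : F → ℝ) (q q' : E → ℝ) :
    N.workload ζ n' q' - N.workload ζ n q = ζ ⬝ᵥ N.displacement n n' q q' := by
  have hsub : (fun f => (n' f - n f) / N.μ f) = (fun f => n' f / N.μ f) - fun f => n f / N.μ f := by
    ext f
    simp [sub_div]
  simp only [workload, displacement]
  change ζ ⬝ᵥ _ - ζ ⬝ᵥ _ = _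
  rw [← dotProduct_sub, ← mulVec_sub, hsub, mulVec_sub N.Gam, add_sub_add_comm]

theorem displacement_eq_smul {n n' : F → ℝ} {q q' : E → ℝ} {t : ℝ} {x : F → ℝ} {σ : E → ℝ}
    (hn' : ∀ f, n' f = n f + t * (N.ν f - N.μ f * x f))
    (hq' : ∀ e, q' e = q e + t * ((N.Gam *ᵥ x) e - ((1 - N.R.transpose) *ᵥ σ) e)) :
    N.displacement n n' q q' = t • (N.lamv - σ) := by
  have hn'' : (fun f => (n' f - n f) / N.μ f) = t • (N.rho - x) := by
    ext f
    have := (N.hμ0 f).ne'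
    simp only [hn' f, rho, Pi.smul_apply, Pi.sub_apply, smul_eq_mul]
    field_simp
    ring
  have hq'' : q' - q = t • (N.Gam *ᵥ x - (1 - N.R.transpose) *ᵥ σ) := by
    ext e
    simp [hq' e]
  rw [displacement, hn'', hq'', mulVec_smul, ← smul_add,
    show N.Gam *ᵥ x - (1 - N.R.transpose) *ᵥ σ + N.Gam *ᵥ (N.rho - x) =
      N.Gam *ᵥ N.rho - (1 - N.R.transpose) *ᵥ σ by rw [mulVec_sub]; abel,
    mulVec_smul, mulVec_sub, N.Xi_mulVec_one_sub]
  rfl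

theorem ALGP_equations_sub_smul (n n' : F → ℝ) (q q' : E → ℝ) {ε : ℝ} (hε : ε ≠ 0) :
    let x := N.rho - ε • fun f => (n' f - n f) / N.μ f
    let σ := N.lamv - ε • N.displacement n n' q q'
    (∀ f, n' f = n f + ε⁻¹ * (N.ν f - N.μ f * x f)) ∧
      ∀ e, q' e = q e + ε⁻¹ * ((N.Gam *ᵥ x) e - ((1 - N.R.transpose) *ᵥ σ) e) := by
  intro x σ
  have hmove : N.Gam *ᵥ x - (1 - N.R.transpose) *ᵥ σ = ε • (q' - q) := by
    simp only [x, σ, mulVec_sub, mulVec_smul, displacement, lamv, one_sub_mulVec_Xi]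
    module
  refine ⟨fun f => ?_, fun e => ?_⟩
  · have := (N.hμ0 f).ne'
    simp only [x, Pi.sub_apply, Pi.smul_apply, smul_eq_mul, rho]
    field_simp
    ring
  · have hmove_e := congrFun hmove e
    simp only [Pi.smul_apply, Pi.sub_apply, smul_eq_mul] at hmove_e
    rw [hmove_e]
    field_simp
    ring

variable {N}

theorem workload_le_of_ALGP (hcrit : N.Leff = 1) (hpos : ∀ e, 0 < N.lamv e)
    {n n' : F → ℝ} {q q' : E → ℝ} {t : ℝ} (ht : 0 ≤ t) {x : F → ℝ} {σ : E → ℝ}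
    (hσ : σ ∈ N.LamSet) (hn' : ∀ f, n' f = n f + t * (N.ν f - N.μ f * x f))
    (hq' : ∀ e, q' e = q e + t * ((N.Gam *ᵥ x) e - ((1 - N.R.transpose) *ᵥ σ) e))
    {ζ : E → ℝ} (hζ : ζ ∈ N.CR) : N.workload ζ n q ≤ N.workload ζ n' q' := by
  rw [← sub_nonneg, workload_sub_workload, N.displacement_eq_smul hn' hq', dotProduct_smul,
    dotProduct_sub, smul_eq_mul, dotProduct_lamv_eq_one_of_mem_CR hcrit hpos hζ]
  exact mul_nonneg ht (sub_nonneg.2 ((N.mem_LamSet_iff hσ.1).1 hσ ζ hζ.1))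

theorem exists_ALGP_of_workload_le (hcrit : N.Leff = 1) (hpos : ∀ e, 0 < N.lamv e)
    {n n' : F → ℝ} {q q' : E → ℝ}
    (h : ∀ ζ ∈ N.CRstar, N.workload ζ n q ≤ N.workload ζ n' q') :
    ∃ t : ℝ, 0 ≤ t ∧ ∃ x : F → ℝ, (∀ f, x f ∈ Set.Icc (0 : ℝ) N.C) ∧
      ∃ σ ∈ N.LamSet,
        (∀ f, n' f = n f + t * (N.ν f - N.μ f * x f)) ∧
        (∀ e, q' e = q e + t * ((N.Gam *ᵥ x) e - ((1 - N.R.transpose) *ᵥ σ) e)) := by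
  set d : F → ℝ := fun f => (n' f - n f) / N.μ f
  set u := N.displacement n n' q q'
  have hx : ∀ᶠ ε in 𝓝 (0 : ℝ), ∀ f, N.rho f - ε * d f ∈ Set.Icc 0 N.C :=
    eventually_all.2 fun f => eventually_sub_mul_mem _ (Icc_mem_nhds (N.rho_pos f) (N.hC f))
  have hσ0 : ∀ᶠ ε in 𝓝 (0 : ℝ), ∀ e, N.lamv e - ε * u e ∈ Set.Ici 0 :=
    eventually_all.2 fun e => eventually_sub_mul_mem _ (Ici_mem_nhds (hpos e))
  have hσ : ∀ᶠ ε in 𝓝[>] (0 : ℝ), ∀ ζ ∈ Set.extremePoints ℝ {ζ | N.dualFeasible ζ},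
      ζ ⬝ᵥ N.lamv - ε * (ζ ⬝ᵥ u) ≤ 1 := by
    refine N.finite_extremePoints_setOf_dualFeasible.eventually_all.2 fun ζ hζ =>
      eventually_nhdsGT_sub_mul_le (dotProduct_lamv_le_one hcrit hζ.1) fun hu => ?_
    refine (dotProduct_lamv_le_one hcrit hζ.1).lt_of_ne fun h1 => hu.not_ge ?_
    rw [← workload_sub_workload, sub_nonneg]
    exact h ζ (mem_CRstar_of_mem_extremePoints hcrit hpos hζ h1)
  obtain ⟨ε, ⟨⟨hx, hσ0⟩, hσ⟩, hε : 0 < ε⟩ :=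
    ((((hx.and hσ0).filter_mono nhdsWithin_le_nhds).and hσ).and self_mem_nhdsWithin).exists
  have hσΛ : N.lamv - ε • u ∈ N.LamSet :=
    N.mem_LamSet_of_forall_extremePoints (fun e => (hσ0 e).out) fun ζ hζ => by
      simpa [dotProduct_sub, dotProduct_smul] using hσ ζ hζ
  obtain ⟨hn', hq'⟩ := N.ALGP_equations_sub_smul n n' q q' hε.ne'
  exact ⟨ε⁻¹, by positivity, N.rho - ε • d, hx, _, hσΛ, hn', hq'⟩

end Network

theorem ALGP_feasible_iff_bALGD_feasible_general
    {E F : Type*} [Fintype E] [Fintype F] [DecidableEq E]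
    (N : Network E F) (hcrit : N.Leff = 1) (hpos : ∀ e, 0 < N.lamv e)
    (n : F → ℝ) (q : E → ℝ)
    (n' : F → ℝ) (q' : E → ℝ) :
    (∃ t : ℝ, 0 ≤ t ∧ ∃ x : F → ℝ, (∀ f, x f ∈ Set.Icc (0 : ℝ) N.C) ∧
      ∃ σ ∈ N.LamSet,
        (∀ f, n' f = n f + t * (N.ν f - N.μ f * x f)) ∧
        (∀ e, q' e = q e + t * ((N.Gam *ᵥ x) e - ((1 - N.R.transpose) *ᵥ σ) e)))
    ↔ (∀ ζ ∈ N.CRstar, N.workload ζ n q ≤ N.workload ζ n' q') := by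
  constructor
  · rintro ⟨t, ht, x, -, σ, hσ, hn', hq'⟩ ζ hζ
    exact Network.workload_le_of_ALGP hcrit hpos ht hσ hn' hq' hζ.1
  · exact Network.exists_ALGP_of_workload_le hcrit hpos

/-- Equivalence of the feasible sets of `ALGP(n,q)` and
`bALGD(n,q)` in a critically loaded system with `ΞΓρ > 0`. -/
theorem ALGP_feasible_iff_bALGD_feasible
    {E F : Type*} [Fintype E] [Fintype F] [DecidableEq E]
    (N : Network E F) (hcrit : N.Leff = 1) (hpos : ∀ e, 0 < N.lamv e)
    (n : F → ℝ) (q : E → ℝ) (hn : ∀ f, 0 ≤ n f) (hq : ∀ e, 0 ≤ q e)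
    (n' : F → ℝ) (q' : E → ℝ) (hn' : ∀ f, 0 ≤ n' f) (hq' : ∀ e, 0 ≤ q' e) :
    (∃ t : ℝ, 0 ≤ t ∧ ∃ x : F → ℝ, (∀ f, x f ∈ Set.Icc (0 : ℝ) N.C) ∧
      ∃ σ ∈ N.LamSet,
        (∀ f, n' f = n f + t * (N.ν f - N.μ f * x f)) ∧
        (∀ e, q' e = q e + t * ((N.Gam *ᵥ x) e - ((1 - N.R.transpose) *ᵥ σ) e)))
    ↔ (∀ ζ ∈ N.CRstar, N.workload ζ n q ≤ N.workload ζ n' q') :=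
  ALGP_feasible_iff_bALGD_feasible_general N hcrit hpos n q n' q'
end

section
/- The lifting map Δ : ℝ₊^ℱ × ℝ₊^ℰ → ℝ₊^ℱ × ℝ₊^ℰ, which sends (n,q) to the unique optimal solution of bALGD(n,q), is continuous, and it is positively homogeneous: for all (n,q) ∈ ℝ₊^ℱ × ℝ₊^ℰ and all κ > 0, Δ(κn, κq) = κ Δ(n,q). -/
open Matrix Filter

/-!
`lift α x` minimises the strictly convex, coercive function `L_α` over the closed convex set
`{p ≥ 0 | w_ζ x ≤ w_ζ p for ζ ∈ CR*}`, so it exists and is unique. The constraints are linear in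
`x` and `L_α` is `(1 + α)`-homogeneous, so scaling `x` by `κ > 0` scales the minimiser by `κ`.
For continuity at `x₀`: for `x` near `x₀` the minimisers lie in a compact sublevel set of `L_α`,
and any cluster point is feasible for `x₀` (the constraints are closed) with value at most
`L_α (lift α x₀)`, because `lift α x₀ + |x - x₀|` is feasible for `x` (`Ξ` and `ζ` are
nonnegative, so each `w_ζ` is monotone). By uniqueness the cluster point is `lift α x₀`.
-/

theorem Matrix.mulVec_nonneg {m n : Type*} [Fintype n] {A : Matrix m n ℝ}
    (hA : ∀ i j, 0 ≤ A i j) {v : n → ℝ} (hv : 0 ≤ v) : 0 ≤ A *ᵥ v :=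
  fun i => dotProduct_nonneg_of_nonneg (fun j => hA i j) hv

theorem Matrix.inv_one_sub_apply_nonneg {n α : Type*} [Fintype n] [DecidableEq n] [CommRing α]
    [PartialOrder α] [IsOrderedRing α] {A : Matrix n n α} (hA : ∀ i j, 0 ≤ A i j)
    (hnil : IsNilpotent A) (i j : n) : 0 ≤ (1 - A)⁻¹ i j := by
  obtain ⟨m, hm⟩ := hnil
  have hgeom : (1 - A)⁻¹ = ∑ k ∈ Finset.range m, A ^ k :=
    Matrix.inv_eq_right_inv (by rw [mul_neg_geom_sum, hm, sub_zero])
  rw [hgeom, Matrix.sum_apply]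
  exact Finset.sum_nonneg fun k _ => Matrix.pow_apply_nonneg hA k i j

theorem StrictConvexOn.div_const {E : Type*} [AddCommMonoid E] [SMul ℝ E] {s : Set E}
    {f : E → ℝ} (hf : StrictConvexOn ℝ s f) {c : ℝ} (hc : 0 < c) :
    StrictConvexOn ℝ s fun x => f x / c := by
  refine ⟨hf.1, fun x hx y hy hxy a b ha hb hab => ?_⟩
  have := hf.2 hx hy hxy ha hb hab
  simp only [smul_eq_mul] at this ⊢
  rw [div_lt_iff₀ hc]
  calc f (a • x + b • y) < a * f x + b * f y := this
    _ = (a * (f x / c) + b * (f y / c)) * c := by field_simp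

theorem strictConvexOn_univ_pi_sum {ι : Type*} [Fintype ι] {s : Set ℝ} {f : ι → ℝ → ℝ}
    (hf : ∀ i, StrictConvexOn ℝ s (f i)) :
    StrictConvexOn ℝ (Set.univ.pi fun _ => s) fun x : ι → ℝ => ∑ i, f i (x i) := by
  refine ⟨convex_pi fun i _ => (hf i).1, fun x hx y hy hxy a b ha hb hab => ?_⟩
  obtain ⟨i, hi⟩ := Function.ne_iff.1 hxy
  simp only [smul_eq_mul, Pi.add_apply, Pi.smul_apply, Finset.mul_sum,
    ← Finset.sum_add_distrib]
  refine Finset.sum_lt_sum (fun j _ => ?_) ⟨i, Finset.mem_univ i, ?_⟩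
  · exact (hf j).convexOn.2 (hx j trivial) (hy j trivial) ha.le hb.le hab
  · exact (hf i).2 (hx i trivial) (hy i trivial) hi ha hb hab

theorem StrictConvexOn.prod_add {E E' : Type*} [AddCommMonoid E] [AddCommMonoid E']
    [Module ℝ E] [Module ℝ E'] {s : Set E} {t : Set E'} {f : E → ℝ} {g : E' → ℝ}
    (hf : StrictConvexOn ℝ s f) (hg : StrictConvexOn ℝ t g) :
    StrictConvexOn ℝ (s ×ˢ t) fun p => f p.1 + g p.2 := by
  refine ⟨hf.1.prod hg.1, fun p hp p' hp' hpp' a b ha hb hab => ?_⟩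
  have hf' := hf.convexOn.2 hp.1 hp'.1 ha.le hb.le hab
  have hg' := hg.convexOn.2 hp.2 hp'.2 ha.le hb.le hab
  simp only [Prod.fst_add, Prod.snd_add, Prod.smul_fst, Prod.smul_snd, smul_eq_mul] at hf' hg' ⊢
  by_cases h1 : p.1 = p'.1
  · have h2 : p.2 ≠ p'.2 := fun h2 => hpp' (Prod.ext h1 h2)
    have := hg.2 hp.2 hp'.2 h2 ha hb hab
    simp only [smul_eq_mul] at this
    linarith
  · have := hf.2 hp.1 hp'.1 h1 ha hb hab
    simp only [smul_eq_mul] at this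
    linarith

theorem le_max_one_of_rpow_le {x r B : ℝ} (hr : 1 ≤ r) (h : x ^ r ≤ B) :
    x ≤ max 1 B := by
  rcases le_total x 1 with hx1 | hx1
  · exact le_max_of_le_left hx1
  · exact le_max_of_le_right ((Real.self_le_rpow_of_one_le hx1 hr).trans h)

open Topology in
theorem continuousWithinAt_of_eventually_mem_isClosed {X Y : Type*} [TopologicalSpace X]
    [TopologicalSpace Y] {m : X → Y} {s : Set X} {x₀ : X} {K : Set Y} {G : Set (X × Y)}
    (hK : IsCompact K) (hG : IsClosed G) (hmK : ∀ᶠ x in 𝓝[s] x₀, m x ∈ K)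
    (hmG : ∀ᶠ x in 𝓝[s] x₀, (x, m x) ∈ G) (hfibre : ∀ y, (x₀, y) ∈ G → y = m x₀) :
    ContinuousWithinAt m s x₀ := by
  refine hK.tendsto_nhds_of_unique_mapClusterPt hmK fun y _ hy => hfibre y ?_
  obtain ⟨U, hU, hmy⟩ := mapClusterPt_iff_ultrafilter.1 hy
  have hid : Filter.Tendsto id (U : Filter X) (𝓝 x₀) := le_trans hU nhdsWithin_le_nhds
  exact hG.mem_of_tendsto (hid.prodMk_nhds hmy) (hU hmG)

theorem continuous_abs_prod_pi {ι ι' : Type*} :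
    Continuous fun p : (ι → ℝ) × (ι' → ℝ) => |p| := by
  change Continuous fun p : (ι → ℝ) × (ι' → ℝ) => (fun i => |p.1 i|, fun i => |p.2 i|)
  fun_prop

namespace Network

variable {E F : Type*} [Fintype E] [Fintype F] [DecidableEq E] (N : Network E F) {α : ℝ}
  {x p : (F → ℝ) × (E → ℝ)}

theorem Xi_apply_nonneg (i j : E) : 0 ≤ N.Xi i j := by
  refine Matrix.inv_one_sub_apply_nonneg (fun i j => ?_) ?_ i j
  · rcases N.hR01 j i with h | h <;> simp [h]
  · obtain ⟨m, hm⟩ := N.hRnil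
    exact ⟨m, by rw [← Matrix.transpose_pow, hm, Matrix.transpose_zero]⟩

theorem Gam_apply_nonneg (e : E) (f : F) : 0 ≤ N.Gam e f := by
  by_cases h : N.iota f = e <;> simp [Gam, h]

noncomputable def workloadₗ (ζ : E → ℝ) : ((F → ℝ) × (E → ℝ)) →ₗ[ℝ] ℝ where
  toFun p := ζ ⬝ᵥ (N.Xi *ᵥ (p.2 + N.Gam *ᵥ fun f => p.1 f / N.μ f))
  map_add' p p' := by
    have hdiv : (fun f => (p + p').1 f / N.μ f) =
        (fun f => p.1 f / N.μ f) + fun f => p'.1 f / N.μ f := funext fun f => add_div _ _ _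
    simp only [hdiv, Prod.snd_add, Matrix.mulVec_add, dotProduct_add]
    abel
  map_smul' c p := by
    have hdiv : (fun f => (c • p).1 f / N.μ f) = c • fun f => p.1 f / N.μ f :=
      funext fun f => mul_div_assoc _ _ _
    simp only [hdiv, Prod.smul_snd, Matrix.mulVec_smul, ← smul_add, dotProduct_smul,
      RingHom.id_apply]

theorem workloadₗ_apply (ζ : E → ℝ) (p : (F → ℝ) × (E → ℝ)) :
    N.workloadₗ ζ p = N.workload ζ p.1 p.2 := rfl

theorem continuous_workloadₗ (ζ : E → ℝ) : Continuous (N.workloadₗ ζ) :=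
  LinearMap.continuous_of_finiteDimensional _

theorem workloadₗ_nonneg {ζ : E → ℝ} (hζ : 0 ≤ ζ) (hp : 0 ≤ p) :
    0 ≤ N.workloadₗ ζ p := by
  refine dotProduct_nonneg_of_nonneg hζ (Matrix.mulVec_nonneg N.Xi_apply_nonneg
    (add_nonneg hp.2 (Matrix.mulVec_nonneg N.Gam_apply_nonneg fun f => ?_)))
  exact div_nonneg (hp.1 f) (N.hμ0 f).le

theorem workloadₗ_mono {ζ : E → ℝ} (hζ : 0 ≤ ζ) : Monotone (N.workloadₗ ζ) := fun p p' h =>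
  sub_nonneg.1 (map_sub (N.workloadₗ ζ) p' p ▸ N.workloadₗ_nonneg hζ (sub_nonneg.2 h))

theorem nonneg_of_mem_CRstar {ζ : E → ℝ} (hζ : ζ ∈ N.CRstar) : 0 ≤ ζ :=
  hζ.1.1.1

theorem Lyap_coeff_pos (α : ℝ) (f : F) : 0 < N.μ f * N.rho f ^ α :=
  mul_pos (N.hμ0 f) (Real.rpow_pos_of_pos (div_pos (N.hν f) (N.hμ0 f)) α)

theorem continuous_Lyap (hα : 0 < α) :
    Continuous fun p : (F → ℝ) × (E → ℝ) => N.Lyap α p.1 p.2 := by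
  have : Continuous fun x : ℝ => x ^ (1 + α) := Real.continuous_rpow_const (by linarith)
  unfold Lyap
  fun_prop

theorem Lyap_smul {κ : ℝ} (hκ : 0 ≤ κ) (hp : 0 ≤ p) :
    N.Lyap α (κ • p).1 (κ • p).2 = κ ^ (1 + α) * N.Lyap α p.1 p.2 := by
  simp only [Lyap, Prod.smul_fst, Prod.smul_snd, Pi.smul_apply, smul_eq_mul,
    Real.mul_rpow hκ (hp.1 _), Real.mul_rpow hκ (hp.2 _), mul_add, Finset.mul_sum, mul_div_assoc]

theorem strictConvexOn_Lyap (hα : 0 < α) :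
    StrictConvexOn ℝ (Set.Ici 0) fun p : (F → ℝ) × (E → ℝ) => N.Lyap α p.1 p.2 := by
  have hpow : StrictConvexOn ℝ (Set.Ici 0) fun x : ℝ => x ^ (1 + α) :=
    strictConvexOn_rpow (by linarith)
  convert (strictConvexOn_univ_pi_sum fun f => hpow.div_const (N.Lyap_coeff_pos α f)).prod_add
    (strictConvexOn_univ_pi_sum fun _ : E => hpow) using 1
  · ext p
    simp [Prod.le_def, Pi.le_def]
  · rfl

theorem rpow_div_le_Lyap (hp : 0 ≤ p) (f : F) :
    p.1 f ^ (1 + α) / (N.μ f * N.rho f ^ α) ≤ N.Lyap α p.1 p.2 := by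
  refine le_add_of_le_of_nonneg (Finset.single_le_sum (f := fun f =>
    p.1 f ^ (1 + α) / (N.μ f * N.rho f ^ α)) (fun f _ => ?_) (Finset.mem_univ f))
    (Finset.sum_nonneg fun e _ => Real.rpow_nonneg (hp.2 e) _)
  exact div_nonneg (Real.rpow_nonneg (hp.1 f) _) (N.Lyap_coeff_pos α f).le

theorem rpow_le_Lyap (hp : 0 ≤ p) (e : E) :
    p.2 e ^ (1 + α) ≤ N.Lyap α p.1 p.2 := by
  refine le_add_of_nonneg_of_le (Finset.sum_nonneg fun f _ => ?_) (Finset.single_le_sum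
    (f := fun e => p.2 e ^ (1 + α)) (fun e _ => Real.rpow_nonneg (hp.2 e) _) (Finset.mem_univ e))
  exact div_nonneg (Real.rpow_nonneg (hp.1 f) _) (N.Lyap_coeff_pos α f).le

theorem isCompact_Lyap_sublevel (hα : 0 < α) (B : ℝ) :
    IsCompact {p : (F → ℝ) × (E → ℝ) | 0 ≤ p ∧ N.Lyap α p.1 p.2 ≤ B} := by
  have hbox : IsCompact ((Set.univ.pi fun f => Set.Icc 0 (max 1 (B * (N.μ f * N.rho f ^ α)))) ×ˢ
      Set.univ.pi fun _ : E => Set.Icc 0 (max 1 B)) :=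
    (isCompact_univ_pi fun _ => isCompact_Icc).prod (isCompact_univ_pi fun _ => isCompact_Icc)
  refine hbox.of_isClosed_subset (isClosed_Ici.inter
    (isClosed_le (N.continuous_Lyap hα) continuous_const)) fun p ⟨hp, hLp⟩ => ?_
  have hr : (1 : ℝ) ≤ 1 + α := by linarith
  refine ⟨fun f _ => ⟨hp.1 f, le_max_one_of_rpow_le hr ?_⟩,
    fun e _ => ⟨hp.2 e, le_max_one_of_rpow_le hr ((N.rpow_le_Lyap hp e).trans hLp)⟩⟩
  rw [← div_le_iff₀ (N.Lyap_coeff_pos α f)]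
  exact (N.rpow_div_le_Lyap hp f).trans hLp

theorem bALGDFeas.nonneg (h : N.bALGDFeas x.1 x.2 p) : 0 ≤ p := ⟨h.1, h.2.1⟩

theorem bALGDFeas_self (hx : 0 ≤ x) : N.bALGDFeas x.1 x.2 x :=
  ⟨hx.1, hx.2, fun _ _ => le_rfl⟩

theorem isClosed_setOf_bALGDFeas :
    IsClosed {z : ((F → ℝ) × (E → ℝ)) × ((F → ℝ) × (E → ℝ)) | N.bALGDFeas z.1.1 z.1.2 z.2} := by
  have hw := N.continuous_workloadₗ
  have h : IsClosed ({z : ((F → ℝ) × (E → ℝ)) × ((F → ℝ) × (E → ℝ)) | 0 ≤ z.2} ∩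
      ⋂ ζ ∈ N.CRstar, {z | N.workloadₗ ζ z.1 ≤ N.workloadₗ ζ z.2}) :=
    (isClosed_le continuous_const continuous_snd).inter
      (isClosed_biInter fun ζ _ =>
        isClosed_le ((hw ζ).comp continuous_fst) ((hw ζ).comp continuous_snd))
  convert h using 1
  ext z
  simp [bALGDFeas, Prod.le_def, Pi.le_def, workloadₗ_apply, and_assoc]

theorem convex_setOf_bALGDFeas (x : (F → ℝ) × (E → ℝ)) :
    Convex ℝ {p | N.bALGDFeas x.1 x.2 p} := by
  have h : Convex ℝ (Set.Ici 0 ∩ ⋂ ζ ∈ N.CRstar, {p | N.workloadₗ ζ x ≤ N.workloadₗ ζ p}) :=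
    (convex_Ici 0).inter (convex_iInter₂ fun ζ _ =>
      convex_halfSpace_ge (N.workloadₗ ζ).isLinear _)
  convert h using 1
  ext p
  simp [bALGDFeas, Prod.le_def, Pi.le_def, workloadₗ_apply, and_assoc]

theorem bALGDFeas.smul (h : N.bALGDFeas x.1 x.2 p) {κ : ℝ} (hκ : 0 ≤ κ) :
    N.bALGDFeas (κ • x).1 (κ • x).2 (κ • p) := by
  refine ⟨(smul_nonneg hκ h.nonneg).1, (smul_nonneg hκ h.nonneg).2, fun ζ hζ => ?_⟩
  change N.workloadₗ ζ (κ • x) ≤ N.workloadₗ ζ (κ • p)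
  rw [map_smul, map_smul]
  exact smul_le_smul_of_nonneg_left (h.2.2 ζ hζ) hκ

theorem bALGDFeas.add_of_le (h : N.bALGDFeas x.1 x.2 p) {y d : (F → ℝ) × (E → ℝ)}
    (hd : 0 ≤ d) (hy : y ≤ x + d) : N.bALGDFeas y.1 y.2 (p + d) := by
  refine ⟨(add_nonneg h.nonneg hd).1, (add_nonneg h.nonneg hd).2, fun ζ hζ => ?_⟩
  have hmono := N.workloadₗ_mono (N.nonneg_of_mem_CRstar hζ)
  calc N.workloadₗ ζ y ≤ N.workloadₗ ζ (x + d) := hmono hy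
    _ = N.workloadₗ ζ x + N.workloadₗ ζ d := map_add _ _ _
    _ ≤ N.workloadₗ ζ p + N.workloadₗ ζ d := by gcongr; exact h.2.2 ζ hζ
    _ = N.workloadₗ ζ (p + d) := (map_add _ _ _).symm

theorem existsUnique_bALGDOpt (hα : 0 < α) (hx : 0 ≤ x) :
    ∃! p, N.bALGDOpt α x.1 x.2 p := by
  set L := fun p : (F → ℝ) × (E → ℝ) => N.Lyap α p.1 p.2
  set K := {p | N.bALGDFeas x.1 x.2 p ∧ L p ≤ L x}
  have hK : IsCompact K :=
    (N.isCompact_Lyap_sublevel hα (L x)).of_isClosed_subset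
      (((N.isClosed_setOf_bALGDFeas).preimage (Continuous.prodMk_right x)).inter
        (isClosed_le (N.continuous_Lyap hα) continuous_const))
      fun p hp => ⟨hp.1.nonneg, hp.2⟩
  have hxK : x ∈ K := ⟨N.bALGDFeas_self hx, le_rfl⟩
  obtain ⟨p, hpK, hmin⟩ := hK.exists_isMinOn ⟨x, hxK⟩ (N.continuous_Lyap hα).continuousOn
  have hopt : N.bALGDOpt α x.1 x.2 p := by
    refine ⟨hpK.1, fun p' hp' => ?_⟩
    rcases le_total (L p') (L x) with h | h
    · exact hmin ⟨hp', h⟩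
    · exact (hmin hxK).trans h
  refine ⟨p, hopt, fun y hy => ?_⟩
  exact ((N.strictConvexOn_Lyap hα).subset (fun _ h => h.nonneg) (N.convex_setOf_bALGDFeas x)
    ).eq_of_isMinOn hy.2 hopt.2 hy.1 hopt.1

theorem bALGDOpt_lift (hα : 0 < α) (hx : 0 ≤ x) : N.bALGDOpt α x.1 x.2 (N.lift α x) := by
  have h := N.existsUnique_bALGDOpt hα hx
  unfold lift
  rw [dif_pos h]
  exact h.choose_spec.1

theorem eq_lift_of_bALGDOpt (hα : 0 < α) (hx : 0 ≤ x) (hp : N.bALGDOpt α x.1 x.2 p) :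
    p = N.lift α x :=
  (N.existsUnique_bALGDOpt hα hx).unique hp (N.bALGDOpt_lift hα hx)

theorem lift_smul (hα : 0 < α) (hx : 0 ≤ x) {κ : ℝ} (hκ : 0 < κ) :
    N.lift α (κ • x) = κ • N.lift α x := by
  have hΔ := N.bALGDOpt_lift hα hx
  refine (N.eq_lift_of_bALGDOpt hα (smul_nonneg hκ.le hx)
    ⟨hΔ.1.smul N hκ.le, fun p' hp' => ?_⟩).symm
  have hp'' : N.bALGDFeas x.1 x.2 (κ⁻¹ • p') := by
    simpa only [inv_smul_smul₀ hκ.ne'] using hp'.smul N (inv_nonneg.2 hκ.le)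
  calc N.Lyap α (κ • N.lift α x).1 (κ • N.lift α x).2
      = κ ^ (1 + α) * N.Lyap α (N.lift α x).1 (N.lift α x).2 := N.Lyap_smul hκ.le hΔ.1.nonneg
    _ ≤ κ ^ (1 + α) * N.Lyap α (κ⁻¹ • p').1 (κ⁻¹ • p').2 := by gcongr; exact hΔ.2 _ hp''
    _ = N.Lyap α p'.1 p'.2 := by
      rw [N.Lyap_smul (inv_nonneg.2 hκ.le) hp'.nonneg, ← mul_assoc,
        ← Real.mul_rpow hκ.le (inv_nonneg.2 hκ.le), mul_inv_cancel₀ hκ.ne', Real.one_rpow,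
        one_mul]

open Topology in
theorem continuousOn_lift (hα : 0 < α) : ContinuousOn (N.lift α) (Set.Ici 0) := by
  intro x₀ hx₀
  set L := fun p : (F → ℝ) × (E → ℝ) => N.Lyap α p.1 p.2
  have hL : Continuous L := N.continuous_Lyap hα
  have hopt := fun x (hx : 0 ≤ x) => N.bALGDOpt_lift hα hx
  set g := fun x => N.lift α x₀ + |x - x₀|
  have hg : Continuous g := continuous_const.add (continuous_abs_prod_pi.comp
    (continuous_id.sub continuous_const))
  have hgx₀ : g x₀ = N.lift α x₀ := by simp [g]
  have hfeas_g : ∀ x, N.bALGDFeas x.1 x.2 (g x) := fun x =>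
    (hopt x₀ hx₀).1.add_of_le N (abs_nonneg _) (sub_le_iff_le_add'.1 (le_abs_self _))
  have hLx : ∀ᶠ x in 𝓝[Set.Ici 0] x₀, L x ≤ L x₀ + 1 :=
    eventually_nhdsWithin_of_eventually_nhds
      ((hL.continuousAt.eventually (gt_mem_nhds (lt_add_one (L x₀)))).mono fun _ h => h.le)
  refine continuousWithinAt_of_eventually_mem_isClosed (N.isCompact_Lyap_sublevel hα (L x₀ + 1))
    ((N.isClosed_setOf_bALGDFeas).inter (isClosed_le (hL.comp continuous_snd)
      (hL.comp (hg.comp continuous_fst))))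
    ?_ ?_ fun y hy => N.eq_lift_of_bALGDOpt hα hx₀ ⟨hy.1, fun p hp => ?_⟩
  · filter_upwards [self_mem_nhdsWithin, hLx] with x hx hLx
    exact ⟨(hopt x hx).1.nonneg, ((hopt x hx).2 x (N.bALGDFeas_self hx)).trans hLx⟩
  · filter_upwards [self_mem_nhdsWithin] with x hx
    exact ⟨(hopt x hx).1, (hopt x hx).2 _ (hfeas_g x)⟩
  · have hLy : L y ≤ L (g x₀) := hy.2
    rw [hgx₀] at hLy
    exact hLy.trans ((hopt x₀ hx₀).2 p hp)

end Network

theorem lift_continuous_and_homogeneous_general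
    {E F : Type*} [Fintype E] [Fintype F] [DecidableEq E]
    (N : Network E F) (α : ℝ) (hα : 0 < α) :
    ContinuousOn (N.lift α)
      {p : (F → ℝ) × (E → ℝ) | (∀ f, 0 ≤ p.1 f) ∧ (∀ e, 0 ≤ p.2 e)} ∧
    ∀ (n : F → ℝ) (q : E → ℝ), (∀ f, 0 ≤ n f) → (∀ e, 0 ≤ q e) →
      ∀ κ : ℝ, 0 < κ → N.lift α (κ • n, κ • q) = κ • N.lift α (n, q) :=
  ⟨N.continuousOn_lift hα, fun n q hn hq _ hκ => N.lift_smul hα (x := (n, q)) ⟨hn, hq⟩ hκ⟩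

/-- The lifting map `Δ` is continuous on the nonnegative orthant
and positively homogeneous. -/
theorem lift_continuous_and_homogeneous
    {E F : Type*} [Fintype E] [Fintype F] [DecidableEq E]
    (N : Network E F) (α : ℝ) (hα : 0 < α) (hα1 : α ≠ 1) :
    ContinuousOn (N.lift α)
      {p : (F → ℝ) × (E → ℝ) | (∀ f, 0 ≤ p.1 f) ∧ (∀ e, 0 ≤ p.2 e)} ∧
    ∀ (n : F → ℝ) (q : E → ℝ), (∀ f, 0 ≤ n f) → (∀ e, 0 ≤ q e) →
      ∀ κ : ℝ, 0 < κ → N.lift α (κ • n, κ • q) = κ • N.lift α (n, q) :=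
  lift_continuous_and_homogeneous_general N α hα
end

section
/- Suppose the system is critically loaded (Leff(ρ) = 1). Let (n,q) ∈ ℝ₊^ℱ × ℝ₊^ℰ and T > 0, and suppose there exists an MWUM-α fluid model solution on [0,T] whose flow-count and queue-length components satisfy (n(t), q(t)) = (n,q) for all t ∈ [0,T]. Then (Γρ)ᵀ q^α = max_{π∈𝒮} πᵀ(I − R) q^α (where q^α is the componentwise α-th power), and n_f = ρ_f q_{ι(f)} for all f ∈ ℱ. -/
open Matrix Filter

/-! On a constant solution every component other than the schedule is affine in time, and the
monotone schedule weights are differentiable almost everywhere, so some interior time is regular.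
There the rate `x_f` equals `ρ_f`, which lies strictly inside `[0, C]`; first-order optimality of
the α-fair objective gives `ρ_f^(-α) n_f^α = q_{ι(f)}^α`, i.e. `n_f = ρ_f q_{ι(f)}` (and `n_f = 0`
forces `q_{ι(f)} = 0` directly). Differentiating the queue equation gives `(I - Rᵀ) Π ṡ = Γρ` with
`𝟏ᵀ ṡ = 1`, and `ṡ` charges only max-weight schedules, so pairing with `q^α` yields
`(Γρ)ᵀ q^α = Σ_π ṡ_π πᵀ (I - R) q^α = max_π πᵀ (I - R) q^α`. -/

open Set MeasureTheory Topology

theorem exists_mem_Ioo_forall_differentiableAt_of_monotoneOn {ι : Type*} [Countable ι]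
    {f : ι → ℝ → ℝ} {a b : ℝ} (hab : a < b) (hf : ∀ i, MonotoneOn (f i) (Icc a b)) :
    ∃ t ∈ Ioo a b, ∀ i, DifferentiableAt ℝ (f i) t := by
  have : (ae (volume.restrict (Ioo a b))).NeBot := ae_restrict_neBot.2 (by simp [hab])
  have hdiff : ∀ᵐ t ∂volume.restrict (Ioo a b), ∀ i, DifferentiableWithinAt ℝ (f i) (Ioo a b) t :=
    ae_all_iff.2 fun i =>
      ((hf i).mono Ioo_subset_Icc_self).ae_differentiableWithinAt measurableSet_Ioo
  obtain ⟨t, ht, hd⟩ := ((ae_restrict_mem measurableSet_Ioo).and hdiff).exists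
  exact ⟨t, ht, fun i => (hd i).differentiableAt (Ioo_mem_nhds ht.1 ht.2)⟩

namespace Network

variable {E F : Type*} [Fintype E] [Fintype F] [DecidableEq E] (N : Network E F)

theorem sum_mul_rpow_eq_sum_weight {w : (E → ℝ) → ℝ} {v : E → ℝ}
    (h : (1 - N.Rᵀ) *ᵥ N.PiV w = v) (α : ℝ) (q : E → ℝ) :
    ∑ e, v e * q e ^ α = ∑ σ ∈ N.S, w σ * N.weight α q σ := by
  have htranspose : 1 - N.Rᵀ = (1 - N.R)ᵀ := by rw [transpose_sub, transpose_one]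
  calc ∑ e, v e * q e ^ α = N.PiV w ⬝ᵥ ((1 - N.R) *ᵥ fun e => q e ^ α) := by
        rw [← h, htranspose, mulVec_transpose, dotProduct_mulVec]; rfl
    _ = ∑ σ ∈ N.S, w σ * N.weight α q σ := by
        simp only [dotProduct, PiV, weight, Finset.sum_mul, Finset.mul_sum]
        rw [Finset.sum_comm]
        simp only [mul_assoc]

theorem sum_mul_weight_eq_maxWeight {w : (E → ℝ) → ℝ} {α : ℝ} {q : E → ℝ}
    (hsum : ∑ σ ∈ N.S, w σ = 1)
    (hslack : ∀ σ ∈ N.S, N.weight α q σ < N.maxWeight α q → w σ = 0) :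
    ∑ σ ∈ N.S, w σ * N.weight α q σ = N.maxWeight α q := by
  calc ∑ σ ∈ N.S, w σ * N.weight α q σ = ∑ σ ∈ N.S, w σ * N.maxWeight α q := by
        refine Finset.sum_congr rfl fun σ hσ => ?_
        rcases (Finset.le_sup' (N.weight α q) hσ).eq_or_lt with h | h
        · rw [h]; rfl
        · rw [hslack σ hσ h, zero_mul, zero_mul]
    _ = N.maxWeight α q := by rw [← Finset.sum_mul, hsum, one_mul]

theorem hasDerivAt_mulVec_piV (A : Matrix E E ℝ) {s : ℝ → (E → ℝ) → ℝ} {ds : (E → ℝ) → ℝ}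
    {t : ℝ} (h : ∀ σ, HasDerivAt (fun u => s u σ) (ds σ) t) (e : E) :
    HasDerivAt (fun u => (A *ᵥ N.PiV (s u)) e) ((A *ᵥ N.PiV ds) e) t :=
  HasDerivAt.fun_sum fun e' _ =>
    (HasDerivAt.fun_sum fun σ _ => (h σ).mul_const (σ e')).const_mul (A e e')

end Network

namespace FMS

theorem hasDerivAt_obj {α : ℝ} (hα1 : α ≠ 1) (nf qf : ℝ) {x : ℝ} (hx : 0 < x) :
    HasDerivAt (obj α nf qf) (x ^ (-α) * nf ^ α - qf ^ α) x := by
  have h1α : (1 : ℝ) - α ≠ 0 := sub_ne_zero.2 hα1.symm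
  have h := (((Real.hasDerivAt_rpow_const (p := 1 - α) (Or.inl hx.ne')).mul_const
    (nf ^ α)).div_const (1 - α)).fun_sub ((hasDerivAt_id x).const_mul (qf ^ α))
  refine h.congr_deriv ?_
  rw [show 1 - α - 1 = -α by ring]
  field_simp

theorem eq_mul_of_isLocalMax_obj {α nf qf x : ℝ} (hα : 0 < α) (hα1 : α ≠ 1) (hn : 0 ≤ nf)
    (hq : 0 ≤ qf) (hx : 0 < x) (hmax : IsLocalMax (obj α nf qf) x) : nf = x * qf := by
  have hcrit := hmax.hasDerivAt_eq_zero (hasDerivAt_obj hα1 nf qf hx)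
  have hpow : (nf / x) ^ α = qf ^ α := by
    rw [Real.div_rpow hn hx.le, div_eq_mul_inv, ← Real.rpow_neg hx.le]
    linarith
  rw [Real.rpow_left_inj (div_nonneg hn hx.le) hq hα.ne', div_eq_iff hx.ne'] at hpow
  rw [hpow, mul_comm]

variable {E F : Type*} [Fintype E] [Fintype F] [DecidableEq E] {N : Network E F} {T : ℝ}
  (Φ : FMS N T)

theorem xbar_eq_rho_mul {f : F} (hn : ∀ t ∈ Icc 0 T, Φ.n t f = Φ.n 0 f) {t : ℝ}
    (ht : t ∈ Icc 0 T) : Φ.xbar t f = N.rho f * t := by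
  have h := Φ.eq_n t ht f
  rw [hn t ht, Φ.eq_fa t ht f, Φ.eq_d t ht f] at h
  rw [Network.rho, div_mul_eq_mul_div, eq_div_iff (N.hμ0 f).ne']
  linarith

theorem exists_forall_differentiableAt_s (hT : 0 < T) :
    ∃ t ∈ Ioo 0 T, ∀ σ, DifferentiableAt ℝ (fun u => Φ.s u σ) t := by
  obtain ⟨t, ht, hd⟩ := exists_mem_Ioo_forall_differentiableAt_of_monotoneOn
    (f := fun (σ : N.S) u => Φ.s u σ) hT fun σ _ hu _ hv huv => Φ.mono_s _ hu _ hv huv σ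
  refine ⟨t, ht, fun σ => ?_⟩
  by_cases hσ : σ ∈ N.S
  · exact hd ⟨σ, hσ⟩
  · have h : EqOn (fun u => Φ.s u σ) 0 (Icc 0 T) := fun u hu => Φ.supp_s u hu σ hσ
    exact (differentiableAt_const 0).congr_of_eventuallyEq
      (h.eventuallyEq_of_mem (Icc_mem_nhds ht.1 ht.2))

theorem regular_of_const {t : ℝ} (ht : t ∈ Ioo 0 T) (hz : ∀ u ∈ Icc 0 T, ∀ e, Φ.z u e = 0)
    (hn : ∀ u ∈ Icc 0 T, Φ.n u = Φ.n 0) (hq : ∀ u ∈ Icc 0 T, Φ.q u = Φ.q 0)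
    (hs : ∀ σ, DifferentiableAt ℝ (fun u => Φ.s u σ) t) :
    Φ.Regular t := by
  have near : ∀ {g h : ℝ → ℝ}, EqOn g h (Icc 0 T) → g =ᶠ[𝓝 t] h :=
    fun hgh => hgh.eventuallyEq_of_mem (Icc_mem_nhds ht.1 ht.2)
  have hx : ∀ f, ∀ u ∈ Icc 0 T, Φ.xbar u f = N.rho f * u :=
    fun f _ hu => Φ.xbar_eq_rho_mul (fun v hv => congrFun (hn v hv) f) hu
  refine ⟨ht, fun e => ?_, fun e => ?_, fun f => ?_, hs, fun f => ?_, fun f => ?_, fun f => ?_,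
    fun f => ?_⟩
  · exact (differentiableAt_const (Φ.q 0 e)).congr_of_eventuallyEq
      (near fun u hu => congrFun (hq u hu) e)
  · exact (differentiableAt_const 0).congr_of_eventuallyEq (near fun u hu => hz u hu e)
  · exact (differentiableAt_const (Φ.n 0 f)).congr_of_eventuallyEq
      (near fun u hu => congrFun (hn u hu) f)
  · exact (differentiableAt_id.const_mul _).congr_of_eventuallyEq (near (hx f))
  · exact (differentiableAt_id.const_mul (N.ν f)).congr_of_eventuallyEq
      (near fun u hu => Φ.eq_fa u hu f)
  · exact (differentiableAt_id.const_mul (N.μ f * N.rho f)).congr_of_eventuallyEq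
      (near fun u hu => by rw [Φ.eq_d u hu f, hx f u hu, mul_assoc]; rfl)
  · exact (differentiableAt_id.const_mul _).congr_of_eventuallyEq
      (near fun u hu => (Φ.eq_a u hu f).trans (hx f u hu))

theorem rate_eq_rho {t : ℝ} (ht : t ∈ Ioo 0 T) {f : F}
    (hn : ∀ u ∈ Icc 0 T, Φ.n u f = Φ.n 0 f) : Φ.rate t f = N.rho f := by
  have hx : (fun u => Φ.xbar u f) =ᶠ[𝓝 t] fun u => N.rho f * u :=
    Filter.eventuallyEq_of_mem (Icc_mem_nhds ht.1 ht.2) fun _ hu => Φ.xbar_eq_rho_mul hn hu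
  rw [rate, hx.deriv_eq]
  simp

theorem sum_deriv_s_eq_one {t : ℝ} (ht : t ∈ Ioo 0 T)
    (hs : ∀ σ, DifferentiableAt ℝ (fun u => Φ.s u σ) t) :
    ∑ σ ∈ N.S, deriv (fun u => Φ.s u σ) t = 1 := by
  have hsum : HasDerivAt (fun u => ∑ σ ∈ N.S, Φ.s u σ) 1 t :=
    (hasDerivAt_id t).congr_of_eventuallyEq
      (Filter.eventuallyEq_of_mem (Icc_mem_nhds ht.1 ht.2) fun u hu => Φ.eq_s u hu)
  exact (hsum.unique (HasDerivAt.fun_sum fun σ _ => (hs σ).hasDerivAt)).symm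

theorem mulVec_piV_deriv_s {t : ℝ} (ht : t ∈ Ioo 0 T) (hz : ∀ u ∈ Icc 0 T, ∀ e, Φ.z u e = 0)
    (hn : ∀ u ∈ Icc 0 T, Φ.n u = Φ.n 0) (hq : ∀ u ∈ Icc 0 T, Φ.q u = Φ.q 0)
    (hs : ∀ σ, DifferentiableAt ℝ (fun u => Φ.s u σ) t) :
    (1 - N.Rᵀ) *ᵥ N.PiV (fun σ => deriv (fun u => Φ.s u σ) t) = N.Gam *ᵥ N.rho := by
  funext e
  have hserved : ∀ u ∈ Icc 0 T, ((1 - N.Rᵀ) *ᵥ N.PiV (Φ.s u)) e = u * (N.Gam *ᵥ N.rho) e := by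
    intro u hu
    have ha : Φ.a u = u • N.rho := funext fun f => by
      rw [Φ.eq_a u hu f, Φ.xbar_eq_rho_mul (fun v hv => congrFun (hn v hv) f) hu, Pi.smul_apply,
        smul_eq_mul, mul_comm]
    have hbalance := Φ.eq_q u hu e
    have hz0 : Φ.z u = 0 := funext (hz u hu)
    rw [hq u hu, hz0, mulVec_zero, ha, mulVec_smul] at hbalance
    simp only [Pi.zero_apply, Pi.smul_apply, smul_eq_mul] at hbalance
    linarith
  have hlin : HasDerivAt (fun u => ((1 - N.Rᵀ) *ᵥ N.PiV (Φ.s u)) e) ((N.Gam *ᵥ N.rho) e) t :=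
    (hasDerivAt_mul_const _).congr_of_eventuallyEq
      (Filter.eventuallyEq_of_mem (Icc_mem_nhds ht.1 ht.2) hserved)
  exact (hlin.unique (N.hasDerivAt_mulVec_piV _ (fun σ => (hs σ).hasDerivAt) e)).symm

end FMS

theorem constant_solution_implies_invariant_conditions_general
    {E F : Type*} [Fintype E] [Fintype F] [DecidableEq E]
    (N : Network E F) (α : ℝ) (hα : 0 < α) (hα1 : α ≠ 1)
    (n : F → ℝ) (q : E → ℝ) (hn : ∀ f, 0 ≤ n f) (hq : ∀ e, 0 ≤ q e)
    (T : ℝ) (hT : 0 < T) (Φ : FMS N T) (hmw : Φ.IsMWUM α)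
    (hconst : ∀ t ∈ Set.Icc (0 : ℝ) T, Φ.n t = n ∧ Φ.q t = q) :
    (∑ e, (N.Gam *ᵥ N.rho) e * q e ^ α = N.maxWeight α q) ∧
    ∀ f, n f = N.rho f * q (N.iota f) := by
  have h0 : (0 : ℝ) ∈ Icc 0 T := left_mem_Icc.2 hT.le
  have hn_const : ∀ t ∈ Icc 0 T, Φ.n t = Φ.n 0 :=
    fun t ht => (hconst t ht).1.trans (hconst 0 h0).1.symm
  have hq_const : ∀ t ∈ Icc 0 T, Φ.q t = Φ.q 0 :=
    fun t ht => (hconst t ht).2.trans (hconst 0 h0).2.symm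
  obtain ⟨t, ht, hs⟩ := Φ.exists_forall_differentiableAt_s hT
  obtain ⟨hn_t, hq_t⟩ := hconst t (Ioo_subset_Icc_self ht)
  obtain ⟨halloc, hslack, hidle⟩ :=
    hmw.2 t (Φ.regular_of_const ht hmw.1 hn_const hq_const hs)
  rw [hq_t] at hslack hidle
  rw [hn_t] at halloc hidle
  refine ⟨?_, fun f => ?_⟩
  · rw [N.sum_mul_rpow_eq_sum_weight (Φ.mulVec_piV_deriv_s ht hmw.1 hn_const hq_const hs)]
    exact N.sum_mul_weight_eq_maxWeight (Φ.sum_deriv_s_eq_one ht hs) hslack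
  rcases (hn f).eq_or_lt with hzero | hpos
  · rw [← hzero, hidle f hzero.symm, mul_zero]
  obtain ⟨-, hmax⟩ := (halloc f).1 hpos
  rw [hq_t, Φ.rate_eq_rho ht fun u hu => congrFun (hn_const u hu) f] at hmax
  have hρ : 0 < N.rho f := div_pos (N.hν f) (N.hμ0 f)
  exact FMS.eq_mul_of_isLocalMax_obj hα hα1 (hn f) (hq _) hρ
    (IsMaxOn.isLocalMax hmax (Icc_mem_nhds hρ (N.hC f)))

/-- If an MWUM-α fluid model solution is constantly equal to
`(n,q)` on `[0,T]` (critically loaded system), then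
`(Γρ)ᵀ q^α = max_{π∈S} πᵀ(I-R)q^α` and `n_f = ρ_f q_{ι(f)}` for all `f`. -/
theorem constant_solution_implies_invariant_conditions
    {E F : Type*} [Fintype E] [Fintype F] [DecidableEq E]
    (N : Network E F) (α : ℝ) (hα : 0 < α) (hα1 : α ≠ 1)
    (hcrit : N.Leff = 1)
    (n : F → ℝ) (q : E → ℝ) (hn : ∀ f, 0 ≤ n f) (hq : ∀ e, 0 ≤ q e)
    (T : ℝ) (hT : 0 < T) (Φ : FMS N T) (hmw : Φ.IsMWUM α)
    (hconst : ∀ t ∈ Set.Icc (0 : ℝ) T, Φ.n t = n ∧ Φ.q t = q) :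
    (∑ e, (N.Gam *ᵥ N.rho) e * q e ^ α = N.maxWeight α q) ∧
    ∀ f, n f = N.rho f * q (N.iota f) :=
  constant_solution_implies_invariant_conditions_general N α hα hα1 n q hn hq T hT Φ hmw hconst
end
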